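/- arXiv:2605.00155 — 6 statements merged into one kernel-verified Lean document; each statement's English description precedes it below -/
import Mathlib

section
/- For any policy vector π in the probability simplex Δ_n, any reward vector r̂ ∈ ℝⁿ, and budget δ ≥ 0, the worst-case regret over ℓ₁-bounded reward perturbations satisfies max_{‖Δ‖₁ ≤ δ} max_{β ∈ Δ_n} ⟨β − π, r̂ + Δ⟩ = δ + max_{1 ≤ i ≤ n} (r̂ᵢ − δ πᵢ) − ⟨π, r̂⟩. -/
/-!
Against a fixed policy `π`, a perturbation `Δ` with `∑ |Δ i| ≤ δ` raises the reward of an action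
`k` relative to the `π`-average by at most `δ (1 - π k)`: this is `ℓ∞`/`ℓ₁` duality, the
coefficient vector `e_k - π` having sup norm `1 - π k`. A best response `β` averages these bounds,
and spending the whole budget on a maximiser `j` of `r i - δ π i`, with `β = e_j`, attains them.
-/

open scoped BigOperators

open Finset

variable {ι : Type*} [Fintype ι]

theorem sum_mul_le_mul_sum_abs {a b : ι → ℝ} {M : ℝ} (ha : ∀ i, |a i| ≤ M) :
    ∑ i, a i * b i ≤ M * ∑ i, |b i| := by
  rw [mul_sum]
  refine sum_le_sum fun i _ => ?_
  calc a i * b i ≤ |a i| * |b i| := abs_mul (a i) (b i) ▸ le_abs_self _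
    _ ≤ M * |b i| := mul_le_mul_of_nonneg_right (ha i) (abs_nonneg _)

theorem sum_mul_le_of_mem_stdSimplex {β x : ι → ℝ} (hβ : β ∈ stdSimplex ℝ ι) {c : ℝ}
    (hx : ∀ i, x i ≤ c) : ∑ i, β i * x i ≤ c :=
  calc ∑ i, β i * x i ≤ ∑ i, β i * c :=
        sum_le_sum fun i _ => mul_le_mul_of_nonneg_left (hx i) (hβ.1 i)
    _ = c := by rw [← sum_mul, hβ.2, one_mul]

theorem add_le_one_of_mem_stdSimplex {π : ι → ℝ} (hπ : π ∈ stdSimplex ℝ ι) {i k : ι}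
    (hik : i ≠ k) : π i + π k ≤ 1 := by
  classical
  rw [← hπ.2, ← sum_pair hik]
  exact sum_le_sum_of_subset_of_nonneg (subset_univ _) fun j _ _ => hπ.1 j

theorem abs_single_sub_le_of_mem_stdSimplex [DecidableEq ι] {π : ι → ℝ}
    (hπ : π ∈ stdSimplex ℝ ι) (k i : ι) : |(Pi.single k 1 : ι → ℝ) i - π i| ≤ 1 - π k := by
  obtain rfl | hik := eq_or_ne i k
  · rw [Pi.single_eq_same, abs_of_nonneg (sub_nonneg.2 (mem_Icc_of_mem_stdSimplex hπ i).2)]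
  · rw [Pi.single_eq_of_ne hik, zero_sub, abs_neg, abs_of_nonneg (hπ.1 i)]
    linarith [add_le_one_of_mem_stdSimplex hπ hik]

theorem sub_sum_mul_le_of_sum_abs_le {π Δ : ι → ℝ} (hπ : π ∈ stdSimplex ℝ ι) {δ : ℝ}
    (hΔ : ∑ i, |Δ i| ≤ δ) (k : ι) : Δ k - ∑ i, π i * Δ i ≤ δ * (1 - π k) := by
  classical
  calc Δ k - ∑ i, π i * Δ i = ∑ i, ((Pi.single k 1 : ι → ℝ) i - π i) * Δ i := by
        simp [sub_mul, sum_sub_distrib, Pi.single_apply]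
    _ ≤ (1 - π k) * ∑ i, |Δ i| :=
        sum_mul_le_mul_sum_abs (abs_single_sub_le_of_mem_stdSimplex hπ k)
    _ ≤ (1 - π k) * δ :=
        mul_le_mul_of_nonneg_left hΔ (sub_nonneg.2 (mem_Icc_of_mem_stdSimplex hπ k).2)
    _ = δ * (1 - π k) := mul_comm _ _

theorem sum_sub_mul_add_le_of_sum_abs_le {π β r Δ : ι → ℝ} (hπ : π ∈ stdSimplex ℝ ι)
    (hβ : β ∈ stdSimplex ℝ ι) {δ M : ℝ} (hΔ : ∑ i, |Δ i| ≤ δ)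
    (hM : ∀ i, r i - δ * π i ≤ M) :
    ∑ i, (β i - π i) * (r i + Δ i) ≤ δ + M - ∑ i, π i * r i := by
  have hsplit : ∑ i, (β i - π i) * (r i + Δ i)
      = ∑ i, β i * (r i + (Δ i - ∑ j, π j * Δ j)) - ∑ i, π i * r i := by
    simp only [sub_mul, mul_add, mul_sub, sum_sub_distrib, sum_add_distrib, ← sum_mul, hβ.2,
      one_mul]
    ring
  rw [hsplit, sub_le_sub_iff_right]
  refine sum_mul_le_of_mem_stdSimplex hβ fun i => ?_
  linarith [sub_sum_mul_le_of_sum_abs_le hπ hΔ i, hM i]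

theorem sum_single_sub_mul_add_single [DecidableEq ι] (π r : ι → ℝ) (δ : ℝ) (j : ι) :
    ∑ i, ((Pi.single j 1 : ι → ℝ) i - π i) * (r i + (Pi.single j δ : ι → ℝ) i)
      = δ + (r j - δ * π j) - ∑ i, π i * r i := by
  simp only [Pi.single_apply, mul_add, sub_mul, ite_mul, one_mul, zero_mul, mul_ite, mul_zero,
    sum_add_distrib, sum_sub_distrib, sum_ite_eq', mem_univ, ↓reduceIte]
  ring

/-- inner adversary closed form for worst-case regret under an
ℓ₁-bounded reward perturbation. -/
theorem stmt0 (n : ℕ) [NeZero n] (π : Fin n → ℝ) (hπ : π ∈ stdSimplex ℝ (Fin n))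
    (r : Fin n → ℝ) (δ : ℝ) (hδ : 0 ≤ δ) :
    IsGreatest
      {v : ℝ | ∃ Δ : Fin n → ℝ, (∑ i, |Δ i|) ≤ δ ∧
        ∃ β ∈ stdSimplex ℝ (Fin n), v = ∑ i, (β i - π i) * (r i + Δ i)}
      (δ + (⨆ i, (r i - δ * π i)) - ∑ i, π i * r i) := by
  obtain ⟨j, hj⟩ := exists_eq_ciSup_of_finite (f := fun i => r i - δ * π i)
  refine ⟨⟨Pi.single j δ, ?_, Pi.single j 1, single_mem_stdSimplex ℝ j, ?_⟩, ?_⟩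
  · simp [Pi.single_apply, apply_ite abs, abs_of_nonneg hδ]
  · rw [sum_single_sub_mul_add_single, ← hj]
  · rintro v ⟨Δ, hΔ, β, hβ, rfl⟩
    exact sum_sub_mul_add_le_of_sum_abs_le hπ hβ hΔ (le_ciSup (Finite.bddAbove_range _))
end

section
/- Suppose r̂₁ ≥ r̂₂ ≥ ⋯ ≥ r̂ₙ and δ > 0. Let t₀ be the unique real solution of ∑ᵢ (r̂ᵢ − t)₊ = δ, and let t* = inf{t ≥ t₀ : ∑_{i : r̂ᵢ > t} (r̂₁ − r̂ᵢ) ≤ δ}. Then the vector π* with πᵢ* = (r̂ᵢ − t*)₊/δ for i = 2,…,n and π₁* = 1 − (1/δ)∑_{i=2}^n (r̂ᵢ − t*)₊ lies in Δ_n and minimizes the worst-case regret max_{‖Δ‖₁ ≤ δ} max_{β ∈ Δ_n} ⟨β − π, r̂ + Δ⟩ over π ∈ Δ_n. -/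
/-! By the closed form of the inner adversary, the regret of `π` is `δ + M(π) - ⟨π, r⟩` with
`M(π) = maxᵢ (rᵢ - δπᵢ)`. Every arm then carries mass `δπᵢ ≥ (rᵢ - M(π))₊`, which forces
`M(π) ≥ t₀` and `δ⟨π, r⟩ ≤ δ r₀ - ∑ᵢ (r₀ - rᵢ)(rᵢ - M(π))₊`, so `δ · regret(π) ≥ δ² - δ r₀ + φ(M(π))`
with `φ(t) = δt + ∑ᵢ (r₀ - rᵢ)(rᵢ - t)₊`. The water-filling policy has `M(π*) ≤ t*` and
`δ · regret(π*) ≤ δ² - δ r₀ + φ(t*)`, and `t*` minimizes the convex piecewise-linear `φ` on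
`[t₀, ∞)`: its right slope at `t*` is `≥ 0` because `t*` belongs to the defining set, its left
slope `≤ 0` because the points just below `t*` do not. -/

open scoped BigOperators

/-- Worst-case regret of `π` over ℓ₁-bounded perturbations of the reward `r`
with budget `δ`. -/
noncomputable def wcRegret (n : ℕ) (δ : ℝ) (r π : Fin n → ℝ) : ℝ :=
  sSup {v : ℝ | ∃ Δ : Fin n → ℝ, (∑ i, |Δ i|) ≤ δ ∧
    ∃ β ∈ stdSimplex ℝ (Fin n), v = ∑ i, (β i - π i) * (r i + Δ i)}

open Finset Filter Topology

section Regret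

variable {ι : Type*} [Fintype ι]

noncomputable def penalizedMax [Nonempty ι] (δ : ℝ) (r π : ι → ℝ) : ℝ :=
  univ.sup' univ_nonempty fun i => r i - δ * π i

lemma le_penalizedMax [Nonempty ι] (δ : ℝ) (r π : ι → ℝ) (i : ι) :
    r i - δ * π i ≤ penalizedMax δ r π :=
  le_sup' (fun i => r i - δ * π i) (mem_univ i)

variable [DecidableEq ι]

lemma abs_single_sub_le {π : ι → ℝ} (hπ : π ∈ stdSimplex ℝ ι) (i j : ι) :
    |(Pi.single j 1 : ι → ℝ) i - π i| ≤ 1 - π j := by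
  by_cases hij : i = j
  · subst hij
    rw [Pi.single_eq_same, abs_of_nonneg (by linarith [(mem_Icc_of_mem_stdSimplex hπ i).2])]
  · have := add_le_sum (fun k _ => hπ.1 k) (mem_univ i) (mem_univ j) hij
    rw [Pi.single_eq_of_ne hij, zero_sub, abs_neg, abs_of_nonneg (hπ.1 i)]
    linarith [hπ.2]

lemma sub_sum_mul_le {π : ι → ℝ} (hπ : π ∈ stdSimplex ℝ ι) (Δ : ι → ℝ) (j : ι) :
    Δ j - ∑ i, π i * Δ i ≤ (1 - π j) * ∑ i, |Δ i| :=
  calc Δ j - ∑ i, π i * Δ i = ∑ i, ((Pi.single j 1 : ι → ℝ) i - π i) * Δ i := by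
        simp [sub_mul, sum_sub_distrib, Pi.single_apply]
    _ ≤ ∑ i, (1 - π j) * |Δ i| := by
        refine sum_le_sum fun i _ => ?_
        calc ((Pi.single j 1 : ι → ℝ) i - π i) * Δ i
            ≤ |(Pi.single j 1 : ι → ℝ) i - π i| * |Δ i| := by
              rw [← abs_mul]; exact le_abs_self _
          _ ≤ (1 - π j) * |Δ i| := by gcongr; exact abs_single_sub_le hπ i j
    _ = (1 - π j) * ∑ i, |Δ i| := (mul_sum _ _ _).symm

lemma regret_le_penalizedMax [Nonempty ι] {δ : ℝ} {r π β Δ : ι → ℝ} (hπ : π ∈ stdSimplex ℝ ι)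
    (hβ : β ∈ stdSimplex ℝ ι) (hΔ : ∑ i, |Δ i| ≤ δ) :
    ∑ i, (β i - π i) * (r i + Δ i) ≤ δ + penalizedMax δ r π - ∑ i, π i * r i := by
  set B := δ + penalizedMax δ r π - ∑ i, π i * r i
  have hpure : ∀ j, r j + Δ j - ∑ i, π i * (r i + Δ i) ≤ B := fun j => by
    have h1 := sub_sum_mul_le hπ Δ j
    have h2 := le_penalizedMax δ r π j
    have h3 : (1 - π j) * ∑ i, |Δ i| ≤ (1 - π j) * δ :=
      mul_le_mul_of_nonneg_left hΔ (by linarith [(mem_Icc_of_mem_stdSimplex hπ j).2])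
    simp only [B, mul_add, sum_add_distrib]
    linarith
  calc ∑ i, (β i - π i) * (r i + Δ i)
      = ∑ j, β j * (r j + Δ j - ∑ i, π i * (r i + Δ i)) := by
        simp only [mul_sub, sub_mul, sum_sub_distrib, ← sum_mul, hβ.2, one_mul]
    _ ≤ ∑ j, β j * B := sum_le_sum fun j _ => mul_le_mul_of_nonneg_left (hpure j) (hβ.1 j)
    _ = B := by rw [← sum_mul, hβ.2, one_mul]

lemma exists_regret_eq_penalizedMax [Nonempty ι] {δ : ℝ} (hδ : 0 ≤ δ) (r π : ι → ℝ) :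
    ∃ Δ : ι → ℝ, ∑ i, |Δ i| ≤ δ ∧ ∃ β ∈ stdSimplex ℝ ι,
      δ + penalizedMax δ r π - ∑ i, π i * r i = ∑ i, (β i - π i) * (r i + Δ i) := by
  obtain ⟨j, -, hj⟩ := exists_mem_eq_sup' univ_nonempty fun i => r i - δ * π i
  refine ⟨Pi.single j δ, by simp [Pi.single_apply, apply_ite, abs_of_nonneg hδ],
    Pi.single j 1, single_mem_stdSimplex ℝ j, ?_⟩
  rw [penalizedMax, hj]
  simp only [Pi.single_apply, mul_add, sub_mul, ite_mul, one_mul, zero_mul, mul_ite, mul_zero,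
    sum_add_distrib, sum_sub_distrib, sum_ite_eq', mem_univ, ↓reduceIte]
  ring

end Regret

lemma wcRegret_eq (n : ℕ) [NeZero n] {δ : ℝ} (hδ : 0 ≤ δ) (r : Fin n → ℝ) {π : Fin n → ℝ}
    (hπ : π ∈ stdSimplex ℝ (Fin n)) :
    wcRegret n δ r π = δ + penalizedMax δ r π - ∑ i, π i * r i := by
  have hub : ∀ v ∈ {v : ℝ | ∃ Δ : Fin n → ℝ, (∑ i, |Δ i|) ≤ δ ∧
      ∃ β ∈ stdSimplex ℝ (Fin n), v = ∑ i, (β i - π i) * (r i + Δ i)},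
      v ≤ δ + penalizedMax δ r π - ∑ i, π i * r i := by
    rintro v ⟨Δ, hΔ, β, hβ, rfl⟩
    exact regret_le_penalizedMax hπ hβ hΔ
  exact le_antisymm (csSup_le ⟨_, exists_regret_eq_penalizedMax hδ r π⟩ hub)
    (le_csSup ⟨_, hub⟩ (exists_regret_eq_penalizedMax hδ r π))

section Hinge

variable {ι : Type*} [Fintype ι]

lemma le_of_sum_max_sub_le {a : ι → ℝ} {s t : ℝ}
    (h : ∑ i, max (a i - s) 0 ≤ ∑ i, max (a i - t) 0) (hpos : 0 < ∑ i, max (a i - t) 0) :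
    t ≤ s := by
  by_contra! hst
  obtain ⟨k, -, hk⟩ := exists_lt_of_sum_lt (s := univ) (f := fun _ => (0 : ℝ))
    (by simpa using hpos)
  have hlt : ∑ i, max (a i - t) 0 < ∑ i, max (a i - s) 0 := by
    refine sum_lt_sum (fun i _ => max_le_max (by linarith) le_rfl) ⟨k, mem_univ k, ?_⟩
    rw [lt_max_iff] at hk
    rcases hk with hk | hk
    · rw [max_eq_left hk.le, max_eq_left (by linarith)]
      linarith
    · simp at hk
  linarith

/-- `-∑ i ∈ S, w i` is a subgradient at `t` of `s ↦ ∑ i, w i * max (a i - s) 0` for every `S`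
between `{i | t < a i}` and `{i | t ≤ a i}`. -/
lemma sum_mul_max_sub_sub_le {w a : ι → ℝ} (hw : ∀ i, 0 ≤ w i) {t : ℝ} {S : Finset ι}
    (hS : ∀ i, t < a i → i ∈ S) (hS' : ∀ i ∈ S, t ≤ a i) (s : ℝ) :
    ∑ i, w i * max (a i - t) 0 - (s - t) * ∑ i ∈ S, w i ≤ ∑ i, w i * max (a i - s) 0 := by
  classical
  rw [← univ_inter S, ← sum_ite_mem, mul_sum, ← sum_sub_distrib]
  refine sum_le_sum fun i _ => ?_
  have hmax := le_max_left (a i - s) 0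
  have hw0 := mul_nonneg (hw i) (le_max_right (a i - s) 0)
  split_ifs with hi
  · rw [max_eq_left (sub_nonneg.2 (hS' i hi))]
    nlinarith [hw i]
  · rw [max_eq_right (by linarith [not_lt.1 (mt (hS i) hi)] : a i - t ≤ 0)]
    linarith

noncomputable def tailWeight (a w : ι → ℝ) (t : ℝ) : ℝ :=
  ∑ i ∈ univ.filter (fun i => t < a i), w i

lemma tailWeight_eq_zero {a : ι → ℝ} (w : ι → ℝ) {t : ℝ} (h : ∀ i, a i ≤ t) :
    tailWeight a w t = 0 :=
  sum_eq_zero fun i hi => absurd (mem_filter.1 hi).2 (not_lt.2 (h i))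

lemma eventually_tailWeight_nhdsGE (a w : ι → ℝ) (t : ℝ) :
    ∀ᶠ s in 𝓝[≥] t, tailWeight a w s = tailWeight a w t := by
  have : ∀ᶠ s in 𝓝[≥] t, ∀ i, s < a i ↔ t < a i := by
    refine eventually_all.2 fun i => ?_
    rcases lt_or_ge t (a i) with h | h
    · filter_upwards [Ico_mem_nhdsGE h] with s hs using iff_of_true hs.2 h
    · filter_upwards [self_mem_nhdsWithin] with s (hs : t ≤ s)
      exact iff_of_false (by linarith) (by linarith)
  filter_upwards [this] with s hs using sum_congr (filter_congr fun i _ => hs i) fun _ _ => rfl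

lemma eventually_tailWeight_nhdsLT (a w : ι → ℝ) (t : ℝ) :
    ∀ᶠ s in 𝓝[<] t, tailWeight a w s = ∑ i ∈ univ.filter (fun i => t ≤ a i), w i := by
  have : ∀ᶠ s in 𝓝[<] t, ∀ i, s < a i ↔ t ≤ a i := by
    refine eventually_all.2 fun i => ?_
    rcases lt_or_ge (a i) t with h | h
    · filter_upwards [Ioo_mem_nhdsLT h] with s hs
      exact iff_of_false (by linarith [hs.1]) (by linarith)
    · filter_upwards [self_mem_nhdsWithin] with s (hs : s < t)
      exact iff_of_true (by linarith) h
  filter_upwards [this] with s hs using sum_congr (filter_congr fun i _ => hs i) fun _ _ => rfl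

variable {a w : ι → ℝ} {t₀ δ : ℝ}

lemma csInf_mem_tailWeight
    (hne : {t | t₀ ≤ t ∧ tailWeight a w t ≤ δ}.Nonempty) :
    sInf {t | t₀ ≤ t ∧ tailWeight a w t ≤ δ} ∈ {t | t₀ ≤ t ∧ tailWeight a w t ≤ δ} := by
  set T := {t | t₀ ≤ t ∧ tailWeight a w t ≤ δ}
  have hglb : IsGLB T (sInf T) := isGLB_csInf hne ⟨t₀, fun t ht => ht.1⟩
  have := hglb.nhdsWithin_neBot hne
  have hle : 𝓝[T] (sInf T) ≤ 𝓝[≥] (sInf T) := nhdsWithin_mono _ fun t ht => hglb.1 ht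
  obtain ⟨s, hs, hsT⟩ :=
    ((eventually_tailWeight_nhdsGE a w (sInf T)).filter_mono hle |>.and self_mem_nhdsWithin).exists
  exact ⟨le_csInf hne fun t ht => ht.1, hs ▸ hsT.2⟩

lemma lt_sum_of_lt_csInf (ht₀ : t₀ < sInf {t | t₀ ≤ t ∧ tailWeight a w t ≤ δ}) :
    δ < ∑ i ∈ univ.filter (fun i => sInf {t | t₀ ≤ t ∧ tailWeight a w t ≤ δ} ≤ a i), w i := by
  set T := {t | t₀ ≤ t ∧ tailWeight a w t ≤ δ}
  obtain ⟨s, hs, hst₀, hsT⟩ := ((eventually_tailWeight_nhdsLT a w (sInf T)).and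
    ((lt_mem_nhds ht₀).filter_mono nhdsWithin_le_nhds |>.and self_mem_nhdsWithin)).exists
  have hsT' : s ∉ T := notMem_of_lt_csInf hsT ⟨t₀, fun t ht => ht.1⟩
  simp only [T, Set.mem_ofPred_eq, not_and, not_le] at hsT'
  exact hs ▸ hsT' hst₀.le

/-- The right slope of `t ↦ δ * t + ∑ i, w i * max (a i - t) 0` is `δ - tailWeight a w t` and its
left slope is `δ - ∑ i ∈ univ.filter (t ≤ a i), w i`; by convexity, a nonnegative right slope and
(away from `t₀`) a nonpositive left slope make `t` a minimizer on `[t₀, ∞)`. -/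
lemma mul_add_sum_le_of_tailWeight_le (hw : ∀ i, 0 ≤ w i) {t M : ℝ} (ht : tailWeight a w t ≤ δ)
    (ht' : t₀ < t → δ ≤ ∑ i ∈ univ.filter (fun i => t ≤ a i), w i) (hM : t₀ ≤ M) :
    δ * t + ∑ i, w i * max (a i - t) 0 ≤ δ * M + ∑ i, w i * max (a i - M) 0 := by
  rcases le_or_gt t M with htM | hMt
  · have := sum_mul_max_sub_sub_le hw (S := univ.filter (fun i => t < a i))
      (fun i hi => mem_filter.2 ⟨mem_univ i, hi⟩) (fun i hi => (mem_filter.1 hi).2.le) M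
    have := mul_le_mul_of_nonneg_left ht (sub_nonneg.2 htM)
    unfold tailWeight at this
    linarith
  · have := sum_mul_max_sub_sub_le hw (S := univ.filter (fun i => t ≤ a i))
      (fun i hi => mem_filter.2 ⟨mem_univ i, hi.le⟩) (fun i hi => (mem_filter.1 hi).2) M
    have := mul_le_mul_of_nonneg_left (ht' (hM.trans_lt hMt)) (sub_nonneg.2 hMt.le)
    linarith

end Hinge

section Policy

variable {ι : Type*} [Fintype ι] {δ : ℝ} {r π : ι → ℝ}

lemma mul_sub_sum_mul_eq (hπ : ∑ i, π i = 1) (c : ℝ) :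
    δ * (c - ∑ i, π i * r i) = ∑ i, (c - r i) * (δ * π i) := by
  conv_lhs => rw [← mul_one c, ← hπ, mul_sum, ← sum_sub_distrib, mul_sum]
  exact sum_congr rfl fun i _ => by ring

variable [Nonempty ι]

lemma max_sub_penalizedMax_le (hδ : 0 ≤ δ) (hπ : π ∈ stdSimplex ℝ ι) (i : ι) :
    max (r i - penalizedMax δ r π) 0 ≤ δ * π i :=
  max_le (by linarith [le_penalizedMax δ r π i]) (mul_nonneg hδ (hπ.1 i))

lemma le_penalizedMax_of_sum_max_sub_eq (hδ : 0 < δ) (hπ : π ∈ stdSimplex ℝ ι) {t₀ : ℝ}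
    (ht₀ : ∑ i, max (r i - t₀) 0 = δ) : t₀ ≤ penalizedMax δ r π := by
  refine le_of_sum_max_sub_le ?_ (ht₀ ▸ hδ)
  calc ∑ i, max (r i - penalizedMax δ r π) 0 ≤ ∑ i, δ * π i :=
        sum_le_sum fun i _ => max_sub_penalizedMax_le hδ.le hπ i
    _ = ∑ i, max (r i - t₀) 0 := by rw [← mul_sum, hπ.2, mul_one, ht₀]

lemma sum_mul_max_sub_penalizedMax_le (hδ : 0 ≤ δ) (hπ : π ∈ stdSimplex ℝ ι) {c : ℝ}
    (hc : ∀ i, r i ≤ c) :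
    ∑ i, (c - r i) * max (r i - penalizedMax δ r π) 0 ≤ δ * (c - ∑ i, π i * r i) := by
  rw [mul_sub_sum_mul_eq hπ.2]
  exact sum_le_sum fun i _ =>
    mul_le_mul_of_nonneg_left (max_sub_penalizedMax_le hδ hπ i) (sub_nonneg.2 (hc i))

end Policy

section WaterFilling

variable {n : ℕ} [NeZero n] {δ t : ℝ} {r : Fin n → ℝ}

noncomputable def waterFilling (δ t : ℝ) (r : Fin n → ℝ) : Fin n → ℝ := fun i =>
  if i = 0 then 1 - (∑ j ∈ univ.erase 0, max (r j - t) 0) / δ else max (r i - t) 0 / δ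

lemma mul_waterFilling_of_ne_zero (hδ : δ ≠ 0) {i : Fin n} (hi : i ≠ 0) :
    δ * waterFilling δ t r i = max (r i - t) 0 := by
  rw [waterFilling, if_neg hi, mul_div_cancel₀ _ hδ]

lemma mul_waterFilling_zero (hδ : δ ≠ 0) :
    δ * waterFilling δ t r 0 = δ - ∑ j ∈ univ.erase 0, max (r j - t) 0 := by
  rw [waterFilling, if_pos rfl, mul_sub, mul_one, mul_div_cancel₀ _ hδ]

lemma waterFilling_mem_stdSimplex (hδ : 0 < δ) (h : ∑ i, max (r i - t) 0 ≤ δ) :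
    waterFilling δ t r ∈ stdSimplex ℝ (Fin n) := by
  have htail : ∑ j ∈ univ.erase 0, max (r j - t) 0 ≤ δ := by
    rw [← add_sum_erase _ _ (mem_univ 0)] at h
    linarith [le_max_right (r 0 - t) 0]
  refine ⟨fun i => ?_, ?_⟩
  · refine (mul_nonneg_iff_of_pos_left hδ).1 ?_
    by_cases hi : i = 0
    · rw [hi, mul_waterFilling_zero hδ.ne']; linarith
    · rw [mul_waterFilling_of_ne_zero hδ.ne' hi]; exact le_max_right _ _
  · refine mul_left_cancel₀ hδ.ne' ?_
    rw [mul_sum, ← add_sum_erase _ _ (mem_univ 0), mul_waterFilling_zero hδ.ne',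
      sum_congr rfl fun j hj => mul_waterFilling_of_ne_zero hδ.ne' (ne_of_mem_erase hj)]
    ring

lemma penalizedMax_waterFilling_le (hδ : 0 < δ) (h : ∑ i, max (r i - t) 0 ≤ δ) :
    penalizedMax δ r (waterFilling δ t r) ≤ t := by
  refine sup'_le _ _ fun i _ => ?_
  by_cases hi : i = 0
  · rw [← add_sum_erase _ _ (mem_univ 0)] at h
    rw [hi, mul_waterFilling_zero hδ.ne']
    linarith [le_max_left (r 0 - t) 0]
  · rw [mul_waterFilling_of_ne_zero hδ.ne' hi]
    linarith [le_max_left (r i - t) 0]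

lemma sum_mul_max_sub_eq_waterFilling (hδ : 0 < δ) (h : ∑ i, max (r i - t) 0 ≤ δ) :
    ∑ i, (r 0 - r i) * max (r i - t) 0 = δ * (r 0 - ∑ i, waterFilling δ t r i * r i) := by
  rw [mul_sub_sum_mul_eq (waterFilling_mem_stdSimplex hδ h).2]
  refine sum_congr rfl fun i _ => ?_
  by_cases hi : i = 0
  · simp [hi]
  · rw [mul_waterFilling_of_ne_zero hδ.ne' hi]

end WaterFilling

/-- the water-filling policy with leftover mass on the top response
lies in the simplex and minimizes the worst-case regret. -/
theorem stmt2 (n : ℕ) [NeZero n] (r : Fin n → ℝ) (hr : Antitone r)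
    (δ : ℝ) (hδ : 0 < δ)
    (t₀ : ℝ) (ht₀ : ∑ i, max (r i - t₀) 0 = δ)
    (tstar : ℝ)
    (htstar : tstar = sInf {t : ℝ | t₀ ≤ t ∧
      (∑ i ∈ Finset.univ.filter (fun i => t < r i), (r 0 - r i)) ≤ δ})
    (πstar : Fin n → ℝ)
    (hπstar : πstar = fun i =>
      if i = 0 then 1 - (∑ j ∈ Finset.univ.erase 0, max (r j - tstar) 0) / δ
      else max (r i - tstar) 0 / δ) :
    πstar ∈ stdSimplex ℝ (Fin n) ∧
    ∀ π ∈ stdSimplex ℝ (Fin n), wcRegret n δ r πstar ≤ wcRegret n δ r π := by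
  obtain rfl : πstar = waterFilling δ tstar r := hπstar
  have hr0 : ∀ i, r i ≤ r 0 := fun i => hr (Fin.zero_le i)
  have hne : {t | t₀ ≤ t ∧ tailWeight r (fun i => r 0 - r i) t ≤ δ}.Nonempty :=
    ⟨max t₀ (r 0), le_max_left _ _,
      (tailWeight_eq_zero _ fun i => (hr0 i).trans (le_max_right _ _)).trans_le hδ.le⟩
  obtain ⟨ht₀star, hstar⟩ := htstar ▸ csInf_mem_tailWeight hne
  have hsum : ∑ i, max (r i - tstar) 0 ≤ δ :=
    ht₀ ▸ sum_le_sum fun i _ => max_le_max (by linarith) le_rfl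
  have hmem := waterFilling_mem_stdSimplex hδ hsum
  refine ⟨hmem, fun π hπ => ?_⟩
  rw [wcRegret_eq n hδ.le r hmem, wcRegret_eq n hδ.le r hπ]
  have hjump : t₀ < tstar → δ ≤ ∑ i ∈ univ.filter (fun i => tstar ≤ r i), (r 0 - r i) := by
    subst htstar; exact fun h => (lt_sum_of_lt_csInf h).le
  have hmin := mul_add_sum_le_of_tailWeight_le (fun i => sub_nonneg.2 (hr0 i)) hstar hjump
    (le_penalizedMax_of_sum_max_sub_eq hδ hπ ht₀)
  have hπval := sum_mul_max_sub_penalizedMax_le hδ.le hπ hr0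
  have hstarval := sum_mul_max_sub_eq_waterFilling hδ hsum
  have hstarmax := mul_le_mul_of_nonneg_left (penalizedMax_waterFilling_le hδ hsum) hδ.le
  refine le_of_mul_le_mul_left ?_ hδ
  linarith
end

section
/- Let Y₁,…,Y_K be i.i.d. samples from a distribution q. Let u, h be measurable functions with 0 ≤ u(y) ≤ U and |h(y)| ≤ H almost surely, and set ν = E_q[u(Y)] > 0 and μ = E_q[u(Y)h(Y)]/ν. Define the self-normalized estimator μ̂_K = (∑ₖ u(Yₖ)h(Yₖ))/(∑ₖ u(Yₖ)). Then for every η ∈ (0,1), if K ≥ (2U²/ν²) log(4/η), with probability at least 1 − η one has |μ̂_K − μ| ≤ (4UH/ν)√(log(4/η)/(2K)). -/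
/-!
Hoeffding's inequality, each time at confidence level `η / 2`, controls the denominator
`∑ u(Yₖ) - Kν` and the centred numerator `∑ u(Yₖ) (h(Yₖ) - μ)`; the latter has mean zero and
summands in an interval of length `2UH`, since `|μ| ≤ H`. With `ε = √(log (4/η) / (2K))`, the
sample-size condition is exactly `Uε ≤ ν/2`, so outside both bad events the denominator is at
least `Kν/2` and `|μ̂_K - μ| = |∑ u(Yₖ) (h(Yₖ) - μ)| / ∑ u(Yₖ) ≤ 2UHKε / (Kν/2)`.
-/

open MeasureTheory Real
open scoped NNReal

namespace ProbabilityTheory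

variable {Ω : Type*} [MeasurableSpace Ω] {P : Measure Ω}

lemma HasSubgaussianMGF.measureReal_lt_abs_le [IsFiniteMeasure P] {X : Ω → ℝ} {c : ℝ≥0}
    (hX : HasSubgaussianMGF X c P) {t : ℝ} (ht : 0 ≤ t) :
    P.real {ω | √(c : ℝ) * t < |X ω|} ≤ 2 * exp (-t ^ 2 / 2) := by
  -- For `c = 0` the Chernoff bound below is useless (`x / 0 = 0`), but then `X = 0` a.e.
  rcases eq_or_ne c 0 with rfl | hc
  · have hnull : P {ω | √((0 : ℝ≥0) : ℝ) * t < |X ω|} = 0 := by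
      refine measure_mono_null (fun ω hω ↦ ?_) (ae_iff.1 hX.ae_eq_zero_of_hasSubgaussianMGF_zero)
      contrapose! hω
      simp_all
    rw [measureReal_def, hnull, ENNReal.toReal_zero]
    positivity
  have htail : ∀ {Z : Ω → ℝ}, HasSubgaussianMGF Z c P →
      P.real {ω | √(c : ℝ) * t ≤ Z ω} ≤ exp (-t ^ 2 / 2) := fun hZ ↦ by
    refine (hZ.measure_ge_le (by positivity)).trans_eq ?_
    rw [mul_pow, Real.sq_sqrt c.coe_nonneg]
    field_simp [NNReal.coe_ne_zero.2 hc]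
  calc P.real {ω | √(c : ℝ) * t < |X ω|}
      ≤ P.real ({ω | √(c : ℝ) * t ≤ X ω} ∪ {ω | √(c : ℝ) * t ≤ (-X) ω}) := by
        refine measureReal_mono fun ω hω ↦ ?_
        rcases le_abs'.1 (Set.mem_ofPred_eq ▸ hω).le with h | h
        · exact Or.inr (by simp only [Set.mem_ofPred_eq, Pi.neg_apply]; linarith)
        · exact Or.inl h
    _ ≤ exp (-t ^ 2 / 2) + exp (-t ^ 2 / 2) :=
        (measureReal_union_le _ _).trans (add_le_add (htail hX) (htail hX.neg))
    _ = 2 * exp (-t ^ 2 / 2) := by ring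

open Finset in
lemma measureReal_lt_abs_sum_sub_integral_le [IsProbabilityMeasure P] {ι : Type*}
    {X : ι → Ω → ℝ} (hindep : iIndepFun X P) (hmeas : ∀ i, AEMeasurable (X i) P) {a b : ℝ}
    (hab : ∀ i, ∀ᵐ ω ∂P, X i ω ∈ Set.Icc a b) (s : Finset ι) {t : ℝ} (ht : 0 ≤ t) :
    P.real {ω | #s * (b - a) * t < |∑ i ∈ s, (X i ω - P[X i])|} ≤
      2 * exp (-2 * #s * t ^ 2) := by
  rcases s.eq_empty_or_nonempty with rfl | ⟨i, -⟩
  · simp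
  have hab' : a ≤ b := by
    obtain ⟨ω, hω⟩ := (hab i).exists
    exact hω.1.trans hω.2
  have hcentered := hindep.comp (fun j (r : ℝ) ↦ r - P[X j]) fun _ ↦ by fun_prop
  have hsum : HasSubgaussianMGF (fun ω ↦ ∑ j ∈ s, (X j ω - P[X j]))
      (∑ j ∈ s, (‖b - a‖₊ / 2) ^ 2) P :=
    HasSubgaussianMGF.sum_of_iIndepFun hcentered fun j _ ↦
      hasSubgaussianMGF_of_mem_Icc (hmeas j) (hab j)
  have hsqrt : √((∑ j ∈ s, (‖b - a‖₊ / 2) ^ 2 : ℝ≥0) : ℝ) = √(#s : ℝ) * ((b - a) / 2) := by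
    push_cast
    rw [sum_const, nsmul_eq_mul, Real.norm_of_nonneg (sub_nonneg.2 hab'),
      Real.sqrt_mul (Nat.cast_nonneg _), Real.sqrt_sq (by linarith)]
  have := hsum.measureReal_lt_abs_le (t := 2 * √(#s : ℝ) * t) (by positivity)
  rw [hsqrt] at this
  convert this using 4
  · rw [show √(#s : ℝ) * ((b - a) / 2) * (2 * √(#s : ℝ) * t) = √(#s : ℝ) ^ 2 * (b - a) * t by
      ring, Real.sq_sqrt (Nat.cast_nonneg _)]
  · rw [mul_pow, mul_pow, Real.sq_sqrt (Nat.cast_nonneg _)]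
    ring

open Finset in
lemma measureReal_lt_abs_sum_comp_sub_integral_le [IsProbabilityMeasure P] {ι α : Type*}
    [MeasurableSpace α] {q : Measure α} {Y : ι → Ω → α} (hmeas : ∀ i, AEMeasurable (Y i) P)
    (hlaw : ∀ i, P.map (Y i) = q) (hindep : iIndepFun Y P) {f : α → ℝ} (hf : Measurable f)
    {a b : ℝ} (hab : ∀ᵐ y ∂q, f y ∈ Set.Icc a b) (s : Finset ι) {δ : ℝ} (hδ : 0 < δ)
    (hδ2 : δ ≤ 2) :
    P.real {ω | #s * (b - a) * √(log (2 / δ) / (2 * #s)) <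
      |∑ i ∈ s, (f (Y i ω) - ∫ y, f y ∂q)|} ≤ δ := by
  rcases s.eq_empty_or_nonempty with rfl | hs
  · simpa using hδ.le
  have hmean : ∀ i, ∫ ω, f (Y i ω) ∂P = ∫ y, f y ∂q := fun i ↦ by
    rw [← hlaw i, integral_map (hmeas i) hf.aestronglyMeasurable]
  have hlog : 0 ≤ log (2 / δ) := log_nonneg ((one_le_div hδ).2 hδ2)
  have hbound := measureReal_lt_abs_sum_sub_integral_le (X := fun i ω ↦ f (Y i ω))
    (hindep.comp (fun _ ↦ f) fun _ ↦ hf) (fun i ↦ hf.comp_aemeasurable (hmeas i))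
    (fun i ↦ ae_of_ae_map (hmeas i) ((hlaw i).symm ▸ hab)) s
    (sqrt_nonneg (log (2 / δ) / (2 * #s)))
  simp only [hmean] at hbound
  refine hbound.trans ?_
  rw [sq_sqrt (by positivity), show -2 * (#s : ℝ) * (log (2 / δ) / (2 * #s)) = -log (2 / δ) by
    field_simp [hs.card_pos.ne'], exp_neg, exp_log (by positivity), inv_div]
  linarith

lemma ofReal_one_sub_le_of_compl_subset [IsProbabilityMeasure P] {S E : Set Ω} {δ : ℝ}
    (hS : Eᶜ ⊆ S) (hE : P.real E ≤ δ) : ENNReal.ofReal (1 - δ) ≤ P S := by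
  rw [← ofReal_measureReal]
  refine ENNReal.ofReal_le_ofReal ?_
  have hcover : 1 ≤ P.real E + P.real Eᶜ := by
    simpa using measureReal_union_le (μ := P) E Eᶜ
  linarith [measureReal_mono (μ := P) hS]

end ProbabilityTheory

section WeightedMean

variable {α : Type*} [MeasurableSpace α] {q : Measure α} [IsFiniteMeasure q] {u h : α → ℝ}
  {U H : ℝ}

lemma abs_integral_mul_div_integral_le (hu : AEMeasurable u q)
    (huU : ∀ᵐ y ∂q, u y ∈ Set.Icc 0 U) (hhH : ∀ᵐ y ∂q, |h y| ≤ H) (hν : 0 < ∫ y, u y ∂q) :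
    |(∫ y, u y * h y ∂q) / ∫ y, u y ∂q| ≤ H := by
  rw [abs_div, abs_of_pos hν, div_le_iff₀ hν, ← Real.norm_eq_abs, ← integral_const_mul]
  refine norm_integral_le_of_norm_le ((Integrable.of_mem_Icc 0 U hu huU).const_mul H) ?_
  filter_upwards [huU, hhH] with y hy hhy
  rw [norm_mul, Real.norm_of_nonneg hy.1, mul_comm]
  exact mul_le_mul_of_nonneg_right hhy hy.1

lemma integral_mul_sub_integral_mul_div_integral_eq_zero (hu : AEMeasurable u q)
    (hh : AEStronglyMeasurable h q) (huU : ∀ᵐ y ∂q, u y ∈ Set.Icc 0 U)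
    (hhH : ∀ᵐ y ∂q, |h y| ≤ H) (hν : ∫ y, u y ∂q ≠ 0) :
    ∫ y, u y * (h y - (∫ y, u y * h y ∂q) / ∫ y, u y ∂q) ∂q = 0 := by
  have hu_int : Integrable u q := Integrable.of_mem_Icc 0 U hu huU
  simp only [mul_sub]
  rw [integral_sub (hu_int.mul_bdd hh hhH) (hu_int.mul_const _), integral_mul_const]
  field_simp
  ring

end WeightedMean

lemma mul_sub_mem_Icc_of_abs_le {x y m U H : ℝ} (hx : 0 ≤ x) (hxU : x ≤ U) (hy : |y| ≤ H)
    (hm : |m| ≤ H) : x * (y - m) ∈ Set.Icc (U * (-H - m)) (U * (H - m)) := by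
  obtain ⟨hy1, hy2⟩ := abs_le.1 hy
  obtain ⟨hm1, hm2⟩ := abs_le.1 hm
  constructor <;> nlinarith

lemma mul_sqrt_div_le_half {U ν L n : ℝ} (hν : 0 < ν) (hn : 0 < n) (hL : 0 ≤ L)
    (h : 2 * U ^ 2 / ν ^ 2 * L ≤ n) : U * √(L / (2 * n)) ≤ ν / 2 := by
  rw [div_mul_eq_mul_div, div_le_iff₀ (by positivity)] at h
  have hsq : (U * √(L / (2 * n))) ^ 2 ≤ (ν / 2) ^ 2 := by
    calc (U * √(L / (2 * n))) ^ 2 = 2 * U ^ 2 * L / (4 * n) := by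
          rw [mul_pow, sq_sqrt (by positivity)]
          field_simp
          ring
      _ ≤ n * ν ^ 2 / (4 * n) := by gcongr
      _ = (ν / 2) ^ 2 := by
          field_simp
          ring
  exact (abs_le_of_sq_le_sq' hsq (by positivity)).2

open Finset in
lemma abs_sum_mul_div_sum_sub_le {ι : Type*} {s : Finset ι} (hs : s.Nonempty) {w g : ι → ℝ}
    {ν m c : ℝ} (hν : 0 < ν) (hw : |∑ i ∈ s, (w i - ν)| ≤ #s * ν / 2)
    (hg : |∑ i ∈ s, w i * (g i - m)| ≤ c) :
    |(∑ i ∈ s, w i * g i) / (∑ i ∈ s, w i) - m| ≤ 2 * c / (#s * ν) := by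
  have hs' : (0 : ℝ) < #s := Nat.cast_pos.2 hs.card_pos
  have hlow : #s * ν / 2 ≤ ∑ i ∈ s, w i := by
    rw [sum_sub_distrib, sum_const, nsmul_eq_mul] at hw
    linarith [(abs_le.1 hw).1]
  have hpos : 0 < ∑ i ∈ s, w i := lt_of_lt_of_le (by positivity) hlow
  have hdiff : (∑ i ∈ s, w i * g i) / (∑ i ∈ s, w i) - m
      = (∑ i ∈ s, w i * (g i - m)) / ∑ i ∈ s, w i := by
    field_simp
    rw [sum_mul, ← sum_sub_distrib]
    exact sum_congr rfl fun i _ ↦ by ring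
  rw [hdiff, abs_div, abs_of_pos hpos]
  calc _ ≤ c / (#s * ν / 2) := div_le_div₀ ((abs_nonneg _).trans hg) hg (by positivity) hlow
    _ = 2 * c / (#s * ν) := by field_simp

/-- finite-sample error bound for self-normalized importance
sampling. -/
theorem stmt8 {Ω α : Type*} [MeasurableSpace Ω] [MeasurableSpace α]
    (ℙ : Measure Ω) [IsProbabilityMeasure ℙ]
    (q : Measure α) [IsProbabilityMeasure q]
    (K : ℕ) (hK : 0 < K) (Y : Fin K → Ω → α)
    (hmeas : ∀ k, Measurable (Y k))
    (hlaw : ∀ k, Measure.map (Y k) ℙ = q)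
    (hindep : ProbabilityTheory.iIndepFun Y ℙ)
    (u h : α → ℝ) (hu : Measurable u) (hh : Measurable h)
    (U H : ℝ)
    (huU : ∀ᵐ y ∂q, 0 ≤ u y ∧ u y ≤ U)
    (hhH : ∀ᵐ y ∂q, |h y| ≤ H)
    (ν : ℝ) (hν : ν = ∫ y, u y ∂q) (hνpos : 0 < ν)
    (μ : ℝ) (hμ : μ = (∫ y, u y * h y ∂q) / ν)
    (η : ℝ) (hη : η ∈ Set.Ioo (0:ℝ) 1)
    (hKbig : (2 * U ^ 2 / ν ^ 2) * Real.log (4 / η) ≤ (K : ℝ)) :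
    ENNReal.ofReal (1 - η) ≤
      ℙ {ω | |(∑ k, u (Y k ω) * h (Y k ω)) / (∑ k, u (Y k ω)) - μ|
          ≤ (4 * U * H / ν) * Real.sqrt (Real.log (4 / η) / (2 * K))} := by
  obtain ⟨hη0, hη1⟩ := hη
  have hlevel : 2 / (η / 2) = 4 / η := by field_simp; ring
  set e := √(log (4 / η) / (2 * K))
  have hUe : U * e ≤ ν / 2 := mul_sqrt_div_le_half hνpos (Nat.cast_pos.2 hK)
    (log_nonneg ((one_le_div hη0).2 (by linarith))) hKbig
  have hμH : |μ| ≤ H := by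
    rw [hμ, hν]
    exact abs_integral_mul_div_integral_le hu.aemeasurable huU hhH (hν ▸ hνpos)
  have hZ_mean : ∫ y, u y * (h y - μ) ∂q = 0 := by
    rw [hμ, hν]
    exact integral_mul_sub_integral_mul_div_integral_eq_zero hu.aemeasurable
      hh.aestronglyMeasurable huU hhH (hν ▸ hνpos.ne')
  have hZ_mem : ∀ᵐ y ∂q, u y * (h y - μ) ∈ Set.Icc (U * (-H - μ)) (U * (H - μ)) := by
    filter_upwards [huU, hhH] with y hy hhy
    exact mul_sub_mem_Icc_of_abs_le hy.1 hy.2 hhy hμH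
  have hW : ℙ.real {ω | K * U * e < |∑ k, (u (Y k ω) - ν)|} ≤ η / 2 := by
    simpa only [Finset.card_univ, Fintype.card_fin, ← hν, sub_zero, hlevel] using
      ProbabilityTheory.measureReal_lt_abs_sum_comp_sub_integral_le
        (fun k ↦ (hmeas k).aemeasurable) hlaw hindep hu huU Finset.univ (half_pos hη0)
        (by linarith)
  have hZ : ℙ.real {ω | K * (U * (H - μ) - U * (-H - μ)) * e <
      |∑ k, u (Y k ω) * (h (Y k ω) - μ)|} ≤ η / 2 := by
    simpa only [Finset.card_univ, Fintype.card_fin, hZ_mean, sub_zero, hlevel] using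
      ProbabilityTheory.measureReal_lt_abs_sum_comp_sub_integral_le
        (f := fun y ↦ u y * (h y - μ)) (fun k ↦ (hmeas k).aemeasurable) hlaw hindep
        (by fun_prop) hZ_mem Finset.univ (half_pos hη0) (by linarith)
  refine ProbabilityTheory.ofReal_one_sub_le_of_compl_subset (E := _ ∪ _) (fun ω hω ↦ ?_)
    ((measureReal_union_le _ _).trans ((add_le_add hW hZ).trans_eq (add_halves η)))
  simp only [Set.compl_union, Set.mem_inter_iff, Set.mem_compl_iff, Set.mem_ofPred_eq,
    not_lt] at hω ⊢
  refine (abs_sum_mul_div_sum_sub_le ⟨⟨0, hK⟩, Finset.mem_univ _⟩ hνpos ?_ hω.2).trans_eq ?_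
  all_goals simp only [Finset.card_univ, Fintype.card_fin]
  · linarith [hω.1, mul_le_mul_of_nonneg_left hUe (Nat.cast_nonneg K)]
  · field_simp
    ring
end

section
/- Fix n ≥ 3, p ∈ [1,∞] with dual exponent q (1/p + 1/q = 1), and δ ≥ 0. For π ∈ Δ_n and the vertex bonus factor b_{p,i}(π) = ‖eᵢ − π‖_q, the worst-case regret over ℓ_p-bounded perturbations satisfies max_{‖Δ‖_p ≤ δ} Reg(π, r̂ + Δ) = max_i { r̂ᵢ − ⟨π, r̂⟩ + δ b_{p,i}(π) }. Moreover b_{p,i}(π) is a function of πᵢ alone for all π ∈ Δ_n if and only if p ∈ {1, ∞}, with b_{1,i}(π) = 1 − πᵢ and b_{∞,i}(π) = 2(1 − πᵢ). -/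
/-!
The perturbed regret `⟨β - π, r + Δ⟩` is affine in `β`, so its maximum over the simplex is
attained at a vertex `eᵢ`, where it equals `rᵢ - ⟨π, r⟩ + ⟨eᵢ - π, Δ⟩`. By Hölder's inequality,
which is an equality at a suitably normalised "norming vector" of `eᵢ - π`, the largest value of
the last term over `‖Δ‖_p ≤ δ` is `δ ‖eᵢ - π‖_q`.

For `π` in the simplex, `|eᵢ - π|` is `1 - πᵢ` at `i` and `πⱼ` elsewhere; this gives the closed
forms for `q ∈ {1, ∞}`. For `1 < q < ∞` one has `‖eᵢ - π‖_q ^ q = (1 - πᵢ)^q - πᵢ^q + ∑ⱼ πⱼ^q`, and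
the power sum is not a function of `πᵢ`: with `πᵢ = 0` it is `1` at a vertex and less than `1` at
the midpoint of two vertices, which exist away from `i` once `n ≥ 3`.
-/

open scoped BigOperators ENNReal

/-- The ℓ_p norm of a vector in ℝⁿ, for p ∈ [1, ∞]. -/
noncomputable def lpNorm {n : ℕ} (p : ℝ≥0∞) (x : Fin n → ℝ) : ℝ :=
  if p = ∞ then ⨆ i, |x i| else (∑ i, |x i| ^ p.toReal) ^ (1 / p.toReal)

theorem ENNReal.HolderConjugate.trichotomy {p q : ℝ≥0∞} (hpq : p.HolderConjugate q) :
    (p = 1 ∧ q = ∞) ∨ (p = ∞ ∧ q = 1) ∨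
      (p ≠ ∞ ∧ q ≠ ∞ ∧ p.toReal.HolderConjugate q.toReal) := by
  by_cases hp : p = ∞
  · exact Or.inr (Or.inl ⟨hp, (eq_top_iff_eq_one p q).1 hp⟩)
  by_cases hq : q = ∞
  · exact Or.inl ⟨(eq_top_iff_eq_one q p).1 hq, hq⟩
  exact Or.inr (Or.inr ⟨hp, hq, toReal_of_ne_top hp hq⟩)

variable {n : ℕ}

theorem lpNorm_eq_norm_toLp {p : ℝ≥0∞} (hp : p ≠ 0) (x : Fin n → ℝ) :
    lpNorm p x = ‖WithLp.toLp p x‖ := by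
  rcases eq_or_ne p ∞ with rfl | hp'
  · simp [lpNorm, PiLp.norm_eq_ciSup]
  · simp [lpNorm, hp', PiLp.norm_eq_sum (ENNReal.toReal_pos hp hp')]

theorem lpNorm_nonneg (p : ℝ≥0∞) (x : Fin n → ℝ) : 0 ≤ lpNorm p x := by
  unfold lpNorm
  split
  · exact Real.iSup_nonneg fun i => abs_nonneg _
  · exact Real.rpow_nonneg (Finset.sum_nonneg fun i _ => Real.rpow_nonneg (abs_nonneg _) _) _

theorem lpNorm_smul {p : ℝ≥0∞} (hp : 1 ≤ p) (c : ℝ) (x : Fin n → ℝ) :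
    lpNorm p (c • x) = |c| * lpNorm p x := by
  have : Fact (1 ≤ p) := ⟨hp⟩
  have hp0 : p ≠ 0 := (zero_lt_one.trans_le hp).ne'
  rw [lpNorm_eq_norm_toLp hp0, lpNorm_eq_norm_toLp hp0, WithLp.toLp_smul, norm_smul,
    Real.norm_eq_abs]

theorem lpNorm_zero {p : ℝ≥0∞} (hp : 1 ≤ p) : lpNorm p (0 : Fin n → ℝ) = 0 := by
  simpa using lpNorm_smul hp 0 0

theorem lpNorm_top (x : Fin n → ℝ) : lpNorm ∞ x = ⨆ i, |x i| := if_pos rfl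

theorem lpNorm_one (x : Fin n → ℝ) : lpNorm 1 x = ∑ i, |x i| := by simp [lpNorm]

theorem lpNorm_of_ne_top {p : ℝ≥0∞} (hp : p ≠ ∞) (x : Fin n → ℝ) :
    lpNorm p x = (∑ i, |x i| ^ p.toReal) ^ (1 / p.toReal) := if_neg hp

theorem abs_le_lpNorm_top (x : Fin n → ℝ) (i : Fin n) : |x i| ≤ lpNorm ∞ x :=
  le_ciSup (f := fun i => |x i|) (Set.finite_range _).bddAbove i

theorem abs_sign_le_one (x : ℝ) : |(SignType.sign x : ℝ)| ≤ 1 := by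
  rcases SignType.sign x with _ | _ | _ <;> simp

theorem sum_mul_le_lpNorm_one_mul_lpNorm_top (x y : Fin n → ℝ) :
    ∑ j, x j * y j ≤ lpNorm 1 x * lpNorm ∞ y := by
  rw [lpNorm_one, Finset.sum_mul]
  refine Finset.sum_le_sum fun j _ => ?_
  calc x j * y j ≤ |x j| * |y j| := (le_abs_self _).trans (abs_mul _ _).le
    _ ≤ |x j| * lpNorm ∞ y := by gcongr; exact abs_le_lpNorm_top y j

theorem sum_mul_le_lpNorm_mul_lpNorm {p q : ℝ≥0∞} (hpq : p.HolderConjugate q)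
    (x y : Fin n → ℝ) : ∑ j, x j * y j ≤ lpNorm p x * lpNorm q y := by
  rcases hpq.trichotomy with ⟨rfl, rfl⟩ | ⟨rfl, rfl⟩ | ⟨hp, hq, hpq'⟩
  · exact sum_mul_le_lpNorm_one_mul_lpNorm_top x y
  · simpa only [mul_comm] using sum_mul_le_lpNorm_one_mul_lpNorm_top y x
  · rw [lpNorm_of_ne_top hp, lpNorm_of_ne_top hq]
    exact Real.inner_le_Lp_mul_Lq _ x y hpq'

theorem exists_lpNorm_one_le_one_sum_mul_eq_lpNorm_top [Nonempty (Fin n)] (y : Fin n → ℝ) :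
    ∃ x, lpNorm 1 x ≤ 1 ∧ ∑ j, y j * x j = lpNorm ∞ y := by
  obtain ⟨k, hk⟩ := exists_eq_ciSup_of_finite (f := fun j => |y j|)
  refine ⟨Pi.single k (SignType.sign (y k) : ℝ), ?_, ?_⟩
  · simpa [lpNorm_one, Pi.single_apply, apply_ite] using abs_sign_le_one (y k)
  · simp [Pi.single_apply, lpNorm_top, ← hk]

theorem exists_lpNorm_top_le_one_sum_mul_eq_lpNorm_one (y : Fin n → ℝ) :
    ∃ x, lpNorm ∞ x ≤ 1 ∧ ∑ j, y j * x j = lpNorm 1 y := by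
  refine ⟨fun j => SignType.sign (y j), ?_, by simp [lpNorm_one]⟩
  rw [lpNorm_top]
  exact Real.iSup_le (fun j => abs_sign_le_one _) zero_le_one

theorem abs_sign_mul_rpow {a : ℝ} (ha : 0 < a) (y : ℝ) :
    |(SignType.sign y : ℝ) * |y| ^ a| = |y| ^ a := by
  rcases eq_or_ne y 0 with rfl | hy
  · simp [Real.zero_rpow ha.ne']
  · rw [abs_mul, abs_of_nonneg (Real.rpow_nonneg (abs_nonneg y) a)]
    rcases lt_or_gt_of_ne hy with h | h <;> simp [h]

theorem exists_lpNorm_le_one_sum_mul_eq_lpNorm_of_ne_top {p q : ℝ≥0∞} (hp : p ≠ ∞)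
    (hq : q ≠ ∞) (hpq : p.toReal.HolderConjugate q.toReal) (y : Fin n → ℝ) :
    ∃ x, lpNorm p x ≤ 1 ∧ ∑ j, y j * x j = lpNorm q y := by
  have one_le {r : ℝ≥0∞} (hr : r ≠ ∞) (h : 1 < r.toReal) : 1 ≤ r :=
    (ENNReal.toReal_le_toReal ENNReal.one_ne_top hr).1 (by simpa using h.le)
  have hp1 := one_le hp hpq.lt
  rcases eq_or_ne y 0 with rfl | hy
  · exact ⟨0, by simp [lpNorm_zero hp1], by simp [lpNorm_zero (one_le hq hpq.symm.lt)]⟩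
  set P := p.toReal
  set Q := q.toReal
  set A := ∑ j, |y j| ^ Q
  have hA : 0 < A := by
    obtain ⟨k, hk⟩ := Function.ne_iff.1 hy
    exact Finset.sum_pos' (fun j _ => by positivity)
      ⟨k, Finset.mem_univ k, Real.rpow_pos_of_pos (abs_pos.2 hk) Q⟩
  -- the equality case of Hölder's inequality
  set u : Fin n → ℝ := fun j => SignType.sign (y j) * |y j| ^ (Q - 1)
  have hyu : ∀ j, y j * u j = |y j| ^ Q := fun j => by
    rw [← mul_assoc, self_mul_sign, ← Real.rpow_one_add' (abs_nonneg _) (by linarith [hpq.symm.lt]),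
      add_sub_cancel]
  have hu : lpNorm p u = A ^ (1 / P) := by
    rw [lpNorm_of_ne_top hp]
    congr 1
    refine Finset.sum_congr rfl fun j _ => ?_
    rw [abs_sign_mul_rpow (by linarith [hpq.symm.lt]), ← Real.rpow_mul (abs_nonneg _),
      hpq.symm.sub_one_mul_conj]
  refine ⟨(A ^ (1 / P))⁻¹ • u, ?_, ?_⟩
  · rw [lpNorm_smul hp1, hu, abs_inv, abs_of_pos (by positivity), inv_mul_cancel₀ (by positivity)]
  · have hsplit : A = A ^ (1 / P) * A ^ (1 / Q) := by
      rw [← Real.rpow_add hA, one_div, one_div, hpq.inv_add_inv_eq_one, Real.rpow_one]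
    simp only [Pi.smul_apply, smul_eq_mul, mul_left_comm (y _), ← Finset.mul_sum, hyu]
    rw [lpNorm_of_ne_top hq, inv_mul_eq_iff_eq_mul₀ (by positivity)]
    exact hsplit

theorem exists_lpNorm_le_one_sum_mul_eq_lpNorm [Nonempty (Fin n)] {p q : ℝ≥0∞}
    (hpq : p.HolderConjugate q) (y : Fin n → ℝ) :
    ∃ x, lpNorm p x ≤ 1 ∧ ∑ j, y j * x j = lpNorm q y := by
  rcases hpq.trichotomy with ⟨rfl, rfl⟩ | ⟨rfl, rfl⟩ | ⟨hp, hq, hpq'⟩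
  · exact exists_lpNorm_one_le_one_sum_mul_eq_lpNorm_top y
  · exact exists_lpNorm_top_le_one_sum_mul_eq_lpNorm_one y
  · exact exists_lpNorm_le_one_sum_mul_eq_lpNorm_of_ne_top hp hq hpq' y

section stdSimplex

variable {ι : Type*} [Fintype ι] {π : ι → ℝ}

theorem nonempty_of_mem_stdSimplex (hπ : π ∈ stdSimplex ℝ ι) : Nonempty ι := by
  by_contra h
  rw [not_nonempty_iff] at h
  simp [stdSimplex_of_isEmpty_index] at hπ

theorem sum_sub_mul_le_of_mem_stdSimplex {β : ι → ℝ} (hβ : β ∈ stdSimplex ℝ ι) (π s : ι → ℝ)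
    {M : ℝ} (h : ∀ i, s i - ∑ j, π j * s j ≤ M) : ∑ i, (β i - π i) * s i ≤ M :=
  calc ∑ i, (β i - π i) * s i = ∑ i, β i * (s i - ∑ j, π j * s j) := by
        simp only [sub_mul, mul_sub, Finset.sum_sub_distrib, ← Finset.sum_mul, hβ.2, one_mul]
    _ ≤ ∑ i, β i * M := Finset.sum_le_sum fun i _ => mul_le_mul_of_nonneg_left (h i) (hβ.1 i)
    _ = M := by rw [← Finset.sum_mul, hβ.2, one_mul]

theorem le_one_sub_of_mem_stdSimplex (hπ : π ∈ stdSimplex ℝ ι) {i j : ι} (hij : j ≠ i) :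
    π j ≤ 1 - π i := by
  classical
  have h := Finset.sum_le_sum_of_subset_of_nonneg (Finset.subset_univ {i, j})
    fun k _ _ => hπ.1 k
  rw [Finset.sum_pair hij.symm, hπ.2] at h
  linarith

theorem sum_rpow_lt_one_of_mem_stdSimplex (hπ : π ∈ stdSimplex ℝ ι) {t : ℝ} (ht : 1 < t)
    {k : ι} (hk₀ : 0 < π k) (hk₁ : π k < 1) : ∑ j, π j ^ t < 1 :=
  hπ.2 ▸ Finset.sum_lt_sum
    (fun j _ => Real.rpow_le_self_of_le_one (hπ.1 j) (mem_Icc_of_mem_stdSimplex hπ j).2 ht.le)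
    ⟨k, Finset.mem_univ k, Real.rpow_lt_self_of_lt_one hk₀ hk₁ ht⟩

variable [DecidableEq ι]

theorem sum_single_rpow {t : ℝ} (ht : t ≠ 0) (k : ι) : ∑ j, (Pi.single k 1 : ι → ℝ) j ^ t = 1 := by
  simp [Pi.single_apply, apply_ite (· ^ t), Real.zero_rpow ht]

theorem sum_vertex_sub_mul (π s : ι → ℝ) (i : ι) :
    ∑ j, ((if j = i then (1 : ℝ) else 0) - π j) * s j = s i - ∑ j, π j * s j := by
  simp [sub_mul, Finset.sum_sub_distrib, ite_mul]

theorem abs_vertex_sub_apply (hπ : π ∈ stdSimplex ℝ ι) (i j : ι) :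
    |(if j = i then (1 : ℝ) else 0) - π j| = if j = i then 1 - π i else π j := by
  split_ifs with h
  · subst h
    exact abs_of_nonneg (sub_nonneg.2 (mem_Icc_of_mem_stdSimplex hπ j).2)
  · rw [zero_sub, abs_neg, abs_of_nonneg (hπ.1 j)]

theorem sum_abs_vertex_sub_rpow (hπ : π ∈ stdSimplex ℝ ι) (i : ι) (t : ℝ) :
    ∑ j, |(if j = i then (1 : ℝ) else 0) - π j| ^ t = (1 - π i) ^ t - π i ^ t + ∑ j, π j ^ t := by
  have h (j : ι) : |(if j = i then (1 : ℝ) else 0) - π j| ^ t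
      = (if j = i then (1 - π i) ^ t - π i ^ t else 0) + π j ^ t := by
    rw [abs_vertex_sub_apply hπ]
    split_ifs with hj
    · rw [hj, sub_add_cancel]
    · rw [zero_add]
  simp only [h, Finset.sum_add_distrib, Finset.sum_ite_eq', Finset.mem_univ, if_true]

end stdSimplex

-- The paper's `b_{p,i}(π)`, indexed here by the dual exponent `q`.
noncomputable def vertexBonus (q : ℝ≥0∞) (π : Fin n → ℝ) (i : Fin n) : ℝ :=
  lpNorm q fun j => (if j = i then (1 : ℝ) else 0) - π j

theorem sub_sum_mul_le_lpNorm_mul_vertexBonus {p q : ℝ≥0∞} (hpq : p.HolderConjugate q)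
    (π Δ : Fin n → ℝ) (i : Fin n) :
    Δ i - ∑ j, π j * Δ j ≤ lpNorm p Δ * vertexBonus q π i := by
  rw [← sum_vertex_sub_mul, mul_comm]
  exact sum_mul_le_lpNorm_mul_lpNorm (ENNReal.HolderConjugate.symm (hpq := hpq)) _ _

theorem exists_lpNorm_le_sub_sum_mul_eq_vertexBonus [Nonempty (Fin n)] {p q : ℝ≥0∞}
    (hpq : p.HolderConjugate q) {δ : ℝ} (hδ : 0 ≤ δ) (π : Fin n → ℝ) (i : Fin n) :
    ∃ Δ, lpNorm p Δ ≤ δ ∧ Δ i - ∑ j, π j * Δ j = δ * vertexBonus q π i := by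
  obtain ⟨x, hx, hxb⟩ := exists_lpNorm_le_one_sum_mul_eq_lpNorm hpq
    fun j => (if j = i then (1 : ℝ) else 0) - π j
  refine ⟨δ • x, ?_, ?_⟩
  · rw [lpNorm_smul (@ENNReal.HolderConjugate.one_le p q hpq), abs_of_nonneg hδ]
    exact mul_le_of_le_one_right hδ hx
  · rw [← sum_vertex_sub_mul, vertexBonus, ← hxb, Finset.mul_sum]
    simp only [Pi.smul_apply, smul_eq_mul]
    exact Finset.sum_congr rfl fun j _ => by ring

theorem isGreatest_perturbedRegret {p q : ℝ≥0∞} (hpq : p.HolderConjugate q) {δ : ℝ}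
    (hδ : 0 ≤ δ) (r : Fin n → ℝ) {π : Fin n → ℝ} (hπ : π ∈ stdSimplex ℝ (Fin n)) :
    IsGreatest
      {v : ℝ | ∃ Δ : Fin n → ℝ, lpNorm p Δ ≤ δ ∧
        ∃ β ∈ stdSimplex ℝ (Fin n), v = ∑ i, (β i - π i) * (r i + Δ i)}
      (⨆ i, (r i - ∑ j, π j * r j + δ * vertexBonus q π i)) := by
  have := nonempty_of_mem_stdSimplex hπ
  set g := fun i => r i - ∑ j, π j * r j + δ * vertexBonus q π i
  have hsplit (Δ : Fin n → ℝ) (i : Fin n) : r i + Δ i - ∑ j, π j * (r j + Δ j)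
      = r i - ∑ j, π j * r j + (Δ i - ∑ j, π j * Δ j) := by
    simp only [mul_add, Finset.sum_add_distrib]
    ring
  constructor
  · obtain ⟨k, hk⟩ := exists_eq_ciSup_of_finite (f := g)
    obtain ⟨Δ, hΔ, hΔk⟩ := exists_lpNorm_le_sub_sum_mul_eq_vertexBonus hpq hδ π k
    refine ⟨Δ, hΔ, fun j => if j = k then 1 else 0,
      by simpa only [eq_comm] using ite_eq_mem_stdSimplex ℝ k, ?_⟩
    rw [← hk, sum_vertex_sub_mul, hsplit, hΔk]
  · rintro _ ⟨Δ, hΔ, β, hβ, rfl⟩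
    refine sum_sub_mul_le_of_mem_stdSimplex hβ π _ fun i => ?_
    calc _ = r i - ∑ j, π j * r j + (Δ i - ∑ j, π j * Δ j) := hsplit Δ i
      _ ≤ g i := by
        show _ ≤ r i - ∑ j, π j * r j + δ * vertexBonus q π i
        gcongr
        exact (sub_sum_mul_le_lpNorm_mul_vertexBonus hpq π Δ i).trans
          (mul_le_mul_of_nonneg_right hΔ (lpNorm_nonneg _ _))
      _ ≤ ⨆ i, g i := le_ciSup (Set.finite_range g).bddAbove i

theorem vertexBonus_top {π : Fin n → ℝ} (hπ : π ∈ stdSimplex ℝ (Fin n)) (i : Fin n) :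
    vertexBonus ∞ π i = 1 - π i := by
  have : Nonempty (Fin n) := ⟨i⟩
  simp only [vertexBonus, lpNorm_top, abs_vertex_sub_apply hπ]
  refine le_antisymm (ciSup_le fun j => ?_) ?_
  · split_ifs with hj
    · exact le_rfl
    · exact le_one_sub_of_mem_stdSimplex hπ hj
  · exact le_ciSup_of_le (Set.finite_range _).bddAbove i (by simp)

theorem vertexBonus_one {π : Fin n → ℝ} (hπ : π ∈ stdSimplex ℝ (Fin n)) (i : Fin n) :
    vertexBonus 1 π i = 2 * (1 - π i) := by
  have h := sum_abs_vertex_sub_rpow hπ i 1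
  simp only [Real.rpow_one, hπ.2] at h
  rw [vertexBonus, lpNorm_one, h]
  ring

theorem vertexBonus_of_apply_eq_zero {q : ℝ≥0∞} (hq : q ≠ ∞) (hq₀ : q.toReal ≠ 0)
    {π : Fin n → ℝ} (hπ : π ∈ stdSimplex ℝ (Fin n)) {i : Fin n} (hi : π i = 0) :
    vertexBonus q π i = (1 + ∑ j, π j ^ q.toReal) ^ (1 / q.toReal) := by
  rw [vertexBonus, lpNorm_of_ne_top hq, sum_abs_vertex_sub_rpow hπ, hi, sub_zero, Real.one_rpow,
    Real.zero_rpow hq₀, sub_zero]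

theorem not_exists_vertexBonus_eq_comp (hn : 3 ≤ n) {q : ℝ≥0∞} (hq : q ≠ ∞)
    (hq₁ : 1 < q.toReal) (i : Fin n) :
    ¬ ∃ f : ℝ → ℝ, ∀ π ∈ stdSimplex ℝ (Fin n), vertexBonus q π i = f (π i) := by
  rintro ⟨f, hf⟩
  have hq₀ : q.toReal ≠ 0 := (zero_lt_one.trans hq₁).ne'
  obtain ⟨k, hk, l, hl, hkl⟩ := (Finset.one_lt_card (s := Finset.univ.erase i)).1 (by
    rw [Finset.card_erase_of_mem (Finset.mem_univ i), Finset.card_univ, Fintype.card_fin]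
    omega)
  rw [Finset.mem_erase] at hk hl
  set π₁ : Fin n → ℝ := Pi.single k 1
  set π₂ : Fin n → ℝ := (1 / 2 : ℝ) • Pi.single k 1 + (1 / 2 : ℝ) • Pi.single l 1
  have hπ₁ : π₁ ∈ stdSimplex ℝ (Fin n) := single_mem_stdSimplex ℝ k
  have hπ₂ : π₂ ∈ stdSimplex ℝ (Fin n) :=
    convex_stdSimplex ℝ _ (single_mem_stdSimplex ℝ k) (single_mem_stdSimplex ℝ l)
      (by norm_num) (by norm_num) (by norm_num)
  have hπ₁i : π₁ i = 0 := by simp [π₁, hk.1.symm]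
  have hπ₂i : π₂ i = 0 := by simp [π₂, hk.1.symm, hl.1.symm]
  have hlt : vertexBonus q π₂ i < vertexBonus q π₁ i := by
    rw [vertexBonus_of_apply_eq_zero hq hq₀ hπ₁ hπ₁i, vertexBonus_of_apply_eq_zero hq hq₀ hπ₂ hπ₂i,
      sum_single_rpow hq₀]
    have hπ₂k : π₂ k = 1 / 2 := by simp [π₂, hkl.symm]
    have hsum := sum_rpow_lt_one_of_mem_stdSimplex hπ₂ hq₁ (k := k) (by norm_num [hπ₂k])
      (by norm_num [hπ₂k])
    have hsum₀ : 0 ≤ ∑ j, π₂ j ^ q.toReal :=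
      Finset.sum_nonneg fun j _ => Real.rpow_nonneg (hπ₂.1 j) _
    exact Real.rpow_lt_rpow (by linarith) (by linarith) (by positivity)
  rw [hf π₁ hπ₁, hf π₂ hπ₂, hπ₁i, hπ₂i] at hlt
  exact lt_irrefl _ hlt

/-- dual-norm rewrite of worst-case regret under ℓ_p-bounded
perturbations, and coordinate-locality of the vertex bonus factor
b_{p,i}(π) = ‖eᵢ − π‖_q if and only if p ∈ {1, ∞}, with the endpoint formulas
b_{1,i}(π) = 1 − πᵢ and b_{∞,i}(π) = 2(1 − πᵢ). -/
theorem stmt10 (n : ℕ) (hn : 3 ≤ n) (p q : ℝ≥0∞) (hpq : ENNReal.HolderConjugate p q)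
    (δ : ℝ) (hδ : 0 ≤ δ) :
    (∀ (r : Fin n → ℝ), ∀ π ∈ stdSimplex ℝ (Fin n),
      IsGreatest
        {v : ℝ | ∃ Δ : Fin n → ℝ, lpNorm p Δ ≤ δ ∧
          ∃ β ∈ stdSimplex ℝ (Fin n), v = ∑ i, (β i - π i) * (r i + Δ i)}
        (⨆ i : Fin n, (r i - (∑ j, π j * r j)
          + δ * lpNorm q (fun j => (if j = i then (1:ℝ) else 0) - π j)))) ∧
    ((∀ i : Fin n, ∃ f : ℝ → ℝ, ∀ π ∈ stdSimplex ℝ (Fin n),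
        lpNorm q (fun j => (if j = i then (1:ℝ) else 0) - π j) = f (π i))
      ↔ (p = 1 ∨ p = ∞)) ∧
    (∀ π ∈ stdSimplex ℝ (Fin n), ∀ i : Fin n,
      lpNorm ∞ (fun j => (if j = i then (1:ℝ) else 0) - π j) = 1 - π i ∧
      lpNorm 1 (fun j => (if j = i then (1:ℝ) else 0) - π j) = 2 * (1 - π i)) := by
  refine ⟨fun r π hπ => isGreatest_perturbedRegret hpq hδ r hπ, ?_,
    fun π hπ i => ⟨vertexBonus_top hπ i, vertexBonus_one hπ i⟩⟩
  rcases hpq.trichotomy with ⟨rfl, rfl⟩ | ⟨rfl, rfl⟩ | ⟨hp, hq, hpq'⟩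
  · exact iff_of_true (fun i => ⟨fun t => 1 - t, fun π hπ => vertexBonus_top hπ i⟩) (.inl rfl)
  · exact iff_of_true (fun i => ⟨fun t => 2 * (1 - t), fun π hπ => vertexBonus_one hπ i⟩)
      (.inr rfl)
  · refine iff_of_false (fun h => not_exists_vertexBonus_eq_comp hn hq hpq'.symm.lt
      ⟨0, by omega⟩ (h _)) ?_
    rintro (rfl | rfl)
    · simpa using hpq'.lt
    · exact hp rfl
end

section
/- For any π ∈ Δ_n, r̂ ∈ ℝⁿ, and δ ≥ 0, the worst-case regret under ℓ_∞-bounded reward perturbations equals the ℓ₁-case with doubled budget: max_{‖Δ‖_∞ ≤ δ} max_{β ∈ Δ_n} ⟨β − π, r̂ + Δ⟩ = 2δ + max_i {r̂ᵢ − 2δπᵢ} − ⟨π, r̂⟩. -/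
/-!
Split the regret as `⟨β - π, r⟩ + ⟨β - π, Δ⟩`. By ℓ₁–ℓ∞ duality the perturbation gains at most
`δ ‖β - π‖₁`, and on the simplex `‖β - π‖₁ ≤ 2 - 2 ⟨β, π⟩` because `|a - b| ≤ a + b - 2ab` on
`[0, 1]`. The regret is therefore at most `2δ + ⟨β, r - 2δπ⟩ - ⟨π, r⟩`, a linear function of `β`
maximised at a vertex `eᵢ`. At the best vertex, the perturbation `Δ = δ (2eᵢ - 1)` attains the bound.
-/

open Finset

theorem abs_sub_le_add_sub_two_mul {a b : ℝ} (ha : a ∈ Set.Icc (0 : ℝ) 1)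
    (hb : b ∈ Set.Icc (0 : ℝ) 1) : |a - b| ≤ a + b - 2 * (a * b) := by
  obtain ⟨ha0, ha1⟩ := ha
  obtain ⟨hb0, hb1⟩ := hb
  rw [abs_le]
  constructor <;> nlinarith [mul_nonneg ha0 (sub_nonneg.2 hb1), mul_nonneg hb0 (sub_nonneg.2 ha1)]

section

variable {ι : Type*} [Fintype ι] {β π : ι → ℝ}

theorem sum_abs_sub_le_of_mem_stdSimplex (hβ : β ∈ stdSimplex ℝ ι) (hπ : π ∈ stdSimplex ℝ ι) :
    ∑ i, |β i - π i| ≤ 2 - 2 * ∑ i, β i * π i := by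
  calc ∑ i, |β i - π i|
      ≤ ∑ i, (β i + π i - 2 * (β i * π i)) :=
        sum_le_sum fun i _ ↦ abs_sub_le_add_sub_two_mul
          (mem_Icc_of_mem_stdSimplex hβ i) (mem_Icc_of_mem_stdSimplex hπ i)
    _ = 2 - 2 * ∑ i, β i * π i := by
        rw [sum_sub_distrib, sum_add_distrib, ← mul_sum, hβ.2, hπ.2]
        ring

theorem sum_mul_le_mul_sum_abs_s12 {x Δ : ι → ℝ} {δ : ℝ} (hΔ : ∀ i, |Δ i| ≤ δ) :
    ∑ i, x i * Δ i ≤ δ * ∑ i, |x i| := by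
  rw [mul_sum]
  refine sum_le_sum fun i _ ↦ ?_
  calc x i * Δ i ≤ |x i * Δ i| := le_abs_self _
    _ = |x i| * |Δ i| := abs_mul _ _
    _ ≤ |x i| * δ := mul_le_mul_of_nonneg_left (hΔ i) (abs_nonneg _)
    _ = δ * |x i| := mul_comm _ _

theorem sum_mul_le_ciSup_of_mem_stdSimplex (hβ : β ∈ stdSimplex ℝ ι) (f : ι → ℝ) :
    ∑ i, β i * f i ≤ ⨆ i, f i := by
  calc ∑ i, β i * f i
      ≤ ∑ i, β i * ⨆ j, f j :=
        sum_le_sum fun i _ ↦ mul_le_mul_of_nonneg_left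
          (le_ciSup (Set.finite_range f).bddAbove i) (hβ.1 i)
    _ = ⨆ j, f j := by rw [← sum_mul, hβ.2, one_mul]

theorem regret_le_of_abs_le (hβ : β ∈ stdSimplex ℝ ι) (hπ : π ∈ stdSimplex ℝ ι)
    {r Δ : ι → ℝ} {δ : ℝ} (hδ : 0 ≤ δ) (hΔ : ∀ i, |Δ i| ≤ δ) :
    ∑ i, (β i - π i) * (r i + Δ i) ≤ 2 * δ + (⨆ i, (r i - 2 * δ * π i)) - ∑ i, π i * r i := by
  have hpert : ∑ i, (β i - π i) * Δ i ≤ δ * (2 - 2 * ∑ i, β i * π i) :=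
    (sum_mul_le_mul_sum_abs_s12 hΔ).trans
      (mul_le_mul_of_nonneg_left (sum_abs_sub_le_of_mem_stdSimplex hβ hπ) hδ)
  have hvertex := sum_mul_le_ciSup_of_mem_stdSimplex hβ fun i ↦ r i - 2 * δ * π i
  have hsplit : ∑ i, (β i - π i) * (r i + Δ i)
      = ∑ i, β i * (r i - 2 * δ * π i) - ∑ i, π i * r i + 2 * δ * ∑ i, β i * π i
        + ∑ i, (β i - π i) * Δ i := by
    simp only [mul_sum, ← sum_sub_distrib, ← sum_add_distrib]
    exact sum_congr rfl fun i _ ↦ by ring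
  linarith

theorem regret_single_eq [DecidableEq ι] (hπ : ∑ i, π i = 1) (r : ι → ℝ) (δ : ℝ) (j : ι) :
    ∑ i, ((Pi.single j 1 : ι → ℝ) i - π i) * (r i + (if i = j then δ else -δ))
      = 2 * δ + (r j - 2 * δ * π j) - ∑ i, π i * r i := by
  have hterm (i : ι) : ((Pi.single j 1 : ι → ℝ) i - π i) * (r i + (if i = j then δ else -δ))
      = (Pi.single j 1 : ι → ℝ) i * (r i + δ - 2 * δ * π i) - π i * r i + δ * π i := by
    by_cases h : i = j
    · subst h; rw [Pi.single_eq_same, if_pos rfl]; ring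
    · rw [Pi.single_eq_of_ne h, if_neg h]; ring
  rw [sum_congr rfl fun i _ ↦ hterm i, sum_add_distrib, sum_sub_distrib, ← mul_sum, hπ]
  simp only [Pi.single_apply, ite_mul, one_mul, zero_mul, Fintype.sum_ite_eq']
  ring

end

/-- worst-case regret under ℓ_∞-bounded reward perturbations
equals the ℓ₁ closed form with doubled budget. -/
theorem stmt12 (n : ℕ) [NeZero n] (π : Fin n → ℝ) (hπ : π ∈ stdSimplex ℝ (Fin n))
    (r : Fin n → ℝ) (δ : ℝ) (hδ : 0 ≤ δ) :
    IsGreatest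
      {v : ℝ | ∃ Δ : Fin n → ℝ, (⨆ i, |Δ i|) ≤ δ ∧
        ∃ β ∈ stdSimplex ℝ (Fin n), v = ∑ i, (β i - π i) * (r i + Δ i)}
      (2 * δ + (⨆ i, (r i - 2 * δ * π i)) - ∑ i, π i * r i) := by
  have hsup (Δ : Fin n → ℝ) : (⨆ i, |Δ i|) ≤ δ ↔ ∀ i, |Δ i| ≤ δ :=
    ciSup_le_iff (Set.finite_range _).bddAbove
  obtain ⟨j, hj⟩ := exists_eq_ciSup_of_finite (f := fun i ↦ r i - 2 * δ * π i)
  refine ⟨⟨fun i ↦ if i = j then δ else -δ, (hsup _).2 fun i ↦ ?_, _,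
    single_mem_stdSimplex ℝ j, ?_⟩, ?_⟩
  · split_ifs <;> simp [abs_of_nonneg hδ]
  · rw [← hj, regret_single_eq hπ.2]
  · rintro v ⟨Δ, hΔ, β, hβ, rfl⟩
    exact regret_le_of_abs_le hβ hπ hδ ((hsup Δ).1 hΔ)
end

section
/- Assume r̂₁ > r̂₂ > ⋯ > r̂ₙ, let φ : ℝ → ℝ be increasing, and set tᵢ = φ(r̂ᵢ). Let π^{DRRO}(δ) maximize ⟨π, r̂⟩ − max_i (r̂ᵢ − δπᵢ) over Δ_n and let π^{DRO}(δ) maximize ⟨π, r̂⟩ − δ‖π‖_∞ over Δ_n (with the explicit top-k-uniform optimizer). Then ∑ᵢ πᵢ^{DRRO}(δ) tᵢ ≥ ∑ᵢ πᵢ^{DRO}(δ) tᵢ; the inequality is strict if φ is strictly increasing and the two optimizers differ. -/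
/-!
Let `t* = max_i (r i - δ π i)` for the DRRO optimizer `π`. Moving mass towards a larger reward
would otherwise be profitable, so `π` is antitone, and `t* ≤ r j` on its support. Since also
`r l - t* ≤ δ π l`, every `j` in the support satisfies `∑_{l<j} (r l - r j) < δ`, which makes the
penalized top mean strictly larger at `j` than at any `m < j`; so the support lies below the DRO
index `m`. Hence `π - π^DRO` is positive only before it is negative, and a zero-sum difference
with this single-crossing property has nonnegative value against any antitone `t`: subtract
`t j₀` at the first negative index `j₀`, making every term nonnegative.
-/

open Finset

section SingleCrossing

variable {ι : Type*} [Fintype ι] {p q t : ι → ℝ}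

lemma sum_mul_sub_sum_mul_eq_of_sum_eq (hpq : ∑ i, p i = ∑ i, q i) (c : ℝ) :
    ∑ i, p i * t i - ∑ i, q i * t i = ∑ i, (p i - q i) * (t i - c) := by
  have h : ∑ i, (p i - q i) * (t i - c)
      = ∑ i, p i * t i - ∑ i, q i * t i - (∑ i, p i - ∑ i, q i) * c := by
    simp only [sub_mul, mul_sub, sum_sub_distrib, sum_mul]
  rw [h, hpq, sub_self, zero_mul, sub_zero]

lemma exists_lt_of_sum_eq_of_ne (hpq : ∑ i, p i = ∑ i, q i) (hne : p ≠ q) : ∃ j, p j < q j := by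
  by_contra! h
  exact hne <| funext fun i =>
    ((sum_eq_sum_iff_of_le fun i _ => h i).mp hpq.symm i (mem_univ i)).symm

variable [LinearOrder ι]

lemma exists_pivot_of_crossing (hcross : ∀ i j, q i < p i → p j < q j → i < j)
    (ht : Antitone t) (h : ∃ j, p j < q j) :
    ∃ j₀, p j₀ < q j₀ ∧ ∀ i, 0 ≤ (p i - q i) * (t i - t j₀) := by
  classical
  set s := univ.filter fun j => p j < q j
  have hs : s.Nonempty := let ⟨j, hj⟩ := h; ⟨j, by simpa [s] using hj⟩
  have hj₀ : p (s.min' hs) < q (s.min' hs) := by simpa [s] using s.min'_mem hs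
  refine ⟨s.min' hs, hj₀, fun i => ?_⟩
  rcases lt_trichotomy (p i) (q i) with hi | hi | hi
  · have : s.min' hs ≤ i := s.min'_le i (by simpa [s] using hi)
    exact mul_nonneg_of_nonpos_of_nonpos (by linarith) (by linarith [ht this])
  · simp [hi]
  · exact mul_nonneg (by linarith) (by linarith [ht (hcross i _ hi hj₀).le])

theorem sum_mul_le_sum_mul_of_crossing (hpq : ∑ i, p i = ∑ i, q i)
    (hcross : ∀ i j, q i < p i → p j < q j → i < j) (ht : Antitone t) :
    ∑ i, q i * t i ≤ ∑ i, p i * t i := by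
  by_cases hne : p = q
  · rw [hne]
  obtain ⟨j₀, -, hterm⟩ := exists_pivot_of_crossing hcross ht (exists_lt_of_sum_eq_of_ne hpq hne)
  have := sum_mul_sub_sum_mul_eq_of_sum_eq (t := t) hpq (t j₀)
  linarith [sum_nonneg fun i (_ : i ∈ univ) => hterm i]

theorem sum_mul_lt_sum_mul_of_crossing (hpq : ∑ i, p i = ∑ i, q i)
    (hcross : ∀ i j, q i < p i → p j < q j → i < j) (ht : StrictAnti t) (hne : p ≠ q) :
    ∑ i, q i * t i < ∑ i, p i * t i := by
  obtain ⟨j₀, hj₀, hterm⟩ :=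
    exists_pivot_of_crossing hcross ht.antitone (exists_lt_of_sum_eq_of_ne hpq hne)
  obtain ⟨i, hi⟩ := exists_lt_of_sum_eq_of_ne hpq.symm (Ne.symm hne)
  have hpos : 0 < (p i - q i) * (t i - t j₀) :=
    mul_pos (by linarith) (by linarith [ht (hcross i j₀ hi hj₀)])
  have := sum_mul_sub_sum_mul_eq_of_sum_eq (t := t) hpq (t j₀)
  linarith [sum_pos' (fun i (_ : i ∈ univ) => hterm i) ⟨i, mem_univ i, hpos⟩]

end SingleCrossing

section DRRO

variable {ι : Type*} [Fintype ι] {r π : ι → ℝ} {δ : ℝ}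

noncomputable def drroLevel (r : ι → ℝ) (δ : ℝ) (π : ι → ℝ) : ℝ :=
  ⨆ i, (r i - δ * π i)

noncomputable def drroObjective (r : ι → ℝ) (δ : ℝ) (π : ι → ℝ) : ℝ :=
  ∑ i, π i * r i - drroLevel r δ π

lemma le_drroLevel (r π : ι → ℝ) (δ : ℝ) (i : ι) : r i - δ * π i ≤ drroLevel r δ π :=
  le_ciSup (Finite.bddAbove_range fun j => r j - δ * π j) i

variable [Nonempty ι]

variable (hπ : π ∈ stdSimplex ℝ ι)
    (hopt : ∀ π' ∈ stdSimplex ℝ ι, drroObjective r δ π' ≤ drroObjective r δ π)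
include hπ hopt

/-- Moving mass `ε` from `j` to `i` gains `ε (r i - r j)` in `⟨π, r⟩`; at an optimum the maximum
must then rise, and only coordinate `j` can raise it. -/
lemma drroLevel_lt_of_transfer (hδ : 0 ≤ δ) {i j : ι} (hij : i ≠ j) (hr : r j < r i) {ε : ℝ}
    (hε : 0 < ε) (hεj : ε ≤ π j) : drroLevel r δ π < r j - δ * (π j - ε) := by
  classical
  by_contra! h
  set π' : ι → ℝ := π + Pi.single i ε - Pi.single j ε
  have hπ'i : π' i = π i + ε := by simp [π', hij]
  have hπ'j : π' j = π j - ε := by simp [π', hij.symm]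
  have hπ'x : ∀ x, x ≠ i → x ≠ j → π' x = π x := fun x hxi hxj => by simp [π', hxi, hxj]
  have hmem : π' ∈ stdSimplex ℝ ι := by
    refine ⟨fun x => ?_, by simp [π', sum_add_distrib, sum_sub_distrib, hπ.2]⟩
    by_cases hxi : x = i
    · rw [hxi, hπ'i]; linarith [hπ.1 i]
    by_cases hxj : x = j
    · rw [hxj, hπ'j]; linarith
    rw [hπ'x x hxi hxj]; exact hπ.1 x
  have hsum : ∑ x, π' x * r x = ∑ x, π x * r x + ε * (r i - r j) := by
    simp [π', add_mul, sub_mul, sum_add_distrib, sum_sub_distrib, Pi.single_apply, mul_sub,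
      add_sub_assoc]
  have hlevel : drroLevel r δ π' ≤ drroLevel r δ π := by
    refine ciSup_le fun x => ?_
    by_cases hxi : x = i
    · rw [hxi, hπ'i]; nlinarith [le_drroLevel r π δ i]
    by_cases hxj : x = j
    · rw [hxj, hπ'j]; exact h
    rw [hπ'x x hxi hxj]; exact le_drroLevel r π δ x
  have := hopt π' hmem
  simp only [drroObjective] at this
  nlinarith [mul_pos hε (sub_pos.2 hr)]

lemma drro_antitone [LinearOrder ι] (hδ : 0 ≤ δ) (hr : StrictAnti r) : Antitone π := by
  intro i j hij
  by_contra! hlt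
  have hij' : i < j := hij.lt_of_ne (by rintro rfl; exact lt_irrefl _ hlt)
  have := drroLevel_lt_of_transfer hπ hopt hδ hij'.ne (hr hij') (sub_pos.2 hlt)
    (by linarith [hπ.1 i])
  linarith [le_drroLevel r π δ i, hr hij']

lemma drroLevel_le_of_pos (hδ : 0 ≤ δ) {j : ι} (hj : 0 < π j) : drroLevel r δ π ≤ r j := by
  by_contra! h
  obtain ⟨i, hi⟩ : ∃ i, r i - δ * π i = drroLevel r δ π := exists_eq_ciSup_of_finite
  have hri : r j < r i := by nlinarith [hπ.1 i]
  have := drroLevel_lt_of_transfer hπ hopt hδ (by rintro rfl; exact lt_irrefl _ hri) hri hj le_rfl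
  linarith

lemma sum_sub_lt_of_drro_pos (hδ : 0 < δ) {j : ι} (hj : 0 < π j) {s : Finset ι} (hjs : j ∉ s) :
    ∑ l ∈ s, (r l - r j) < δ := by
  classical
  have hlevel := drroLevel_le_of_pos hπ hopt hδ.le hj
  have hterm : ∀ l ∈ s, r l - r j ≤ δ * π l := fun l _ => by
    linarith [le_drroLevel r π δ l]
  have hmass : ∑ l ∈ s, π l + π j ≤ 1 := by
    rw [add_comm, ← sum_insert hjs, ← hπ.2]
    exact sum_le_univ_sum_of_nonneg hπ.1
  calc ∑ l ∈ s, (r l - r j) ≤ δ * ∑ l ∈ s, π l := by rw [mul_sum]; exact sum_le_sum hterm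
    _ < δ := by nlinarith

end DRRO

section DRO

variable {n : ℕ} {r : Fin n → ℝ} {δ : ℝ}

/-- The DRO objective `⟨π, r⟩ - δ ‖π‖_∞` at the uniform distribution on the indices `≤ k`. -/
noncomputable def penalizedTopMean (r : Fin n → ℝ) (δ : ℝ) (k : Fin n) : ℝ :=
  (∑ i ∈ univ.filter (fun i => i ≤ k), r i) / ((k : ℝ) + 1) - δ / ((k : ℝ) + 1)

lemma sum_Iic_eq_sum_sub_add (r : Fin n → ℝ) (k : Fin n) (ρ : ℝ) :
    ∑ l ∈ Iic k, r l = ∑ l ∈ Iic k, (r l - ρ) + ((k : ℝ) + 1) * ρ := by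
  rw [sum_sub_distrib, sum_const, Fin.card_Iic, nsmul_eq_mul]
  push_cast
  ring

lemma penalizedTopMean_lt (hr : Antitone r) {m i : Fin n} (hmi : m < i)
    (hgap : ∑ l ∈ Iio i, (r l - r i) < δ) :
    penalizedTopMean r δ m < penalizedTopMean r δ i := by
  have hnonneg : ∀ l ∈ Iic i, 0 ≤ r l - r i := fun l hl => sub_nonneg.2 (hr (mem_Iic.1 hl))
  have hm_gap : ∑ l ∈ Iic m, (r l - r i) < δ := by
    refine lt_of_le_of_lt (sum_le_sum_of_subset_of_nonneg (fun l hl => ?_)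
      fun l hl _ => hnonneg l (Iio_subset_Iic_self hl)) hgap
    exact mem_Iio.2 ((mem_Iic.1 hl).trans_lt hmi)
  have hm_le : ∑ l ∈ Iic m, (r l - r i) ≤ ∑ l ∈ Iic i, (r l - r i) :=
    sum_le_sum_of_subset_of_nonneg (Iic_subset_Iic.2 hmi.le) fun l hl _ => hnonneg l hl
  have hcard : ((m : ℕ) : ℝ) + 1 < ((i : ℕ) : ℝ) + 1 := by simpa using hmi
  unfold penalizedTopMean
  rw [filter_ge_eq_Iic, filter_ge_eq_Iic, sum_Iic_eq_sum_sub_add r m (r i),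
    sum_Iic_eq_sum_sub_add r i (r i), div_sub_div_same, div_sub_div_same,
    div_lt_div_iff₀ (by positivity) (by positivity)]
  nlinarith

lemma sum_ite_le_one_div_eq_one (m : Fin n) :
    ∑ i : Fin n, (if i ≤ m then 1 / ((m : ℝ) + 1) else 0) = 1 := by
  rw [sum_ite, sum_const_zero, add_zero, sum_const, filter_ge_eq_Iic, Fin.card_Iic, nsmul_eq_mul]
  push_cast
  field_simp

end DRO

lemma lt_of_crossing_uniform {ι : Type*} [LinearOrder ι] {p : ι → ℝ} (hp : Antitone p)
    (hp0 : ∀ i, 0 ≤ p i) {m : ι} (hsupp : ∀ i, 0 < p i → i ≤ m) {c : ℝ} {i j : ι}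
    (hi : (if i ≤ m then c else 0) < p i) (hj : p j < if j ≤ m then c else 0) : i < j := by
  have hjm : j ≤ m := by
    by_contra h
    rw [if_neg h] at hj
    linarith [hp0 j]
  rw [if_pos hjm] at hj
  have him : i ≤ m := hsupp i (by split_ifs at hi <;> linarith [hp0 j])
  rw [if_pos him] at hi
  by_contra! hji
  linarith [hp hji]

theorem stmt16_general (n : ℕ) [NeZero n] (r : Fin n → ℝ) (hr : StrictAnti r)
    (δ : ℝ) (hδ : 0 < δ)
    (φ : ℝ → ℝ) (hφ : Monotone φ)
    (t : Fin n → ℝ) (ht : t = fun i => φ (r i))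
    (πDRRO : Fin n → ℝ) (hDRRO_mem : πDRRO ∈ stdSimplex ℝ (Fin n))
    (hDRRO_opt : ∀ π ∈ stdSimplex ℝ (Fin n),
      (∑ i, π i * r i) - (⨆ i, (r i - δ * π i))
        ≤ (∑ i, πDRRO i * r i) - (⨆ i, (r i - δ * πDRRO i)))
    (πDRO : Fin n → ℝ)
    (m : Fin n)
    (hm : ∀ k : Fin n,
      (∑ i ∈ Finset.univ.filter (fun i => i ≤ k), r i) / ((k : ℝ) + 1)
          - δ / ((k : ℝ) + 1)
        ≤ (∑ i ∈ Finset.univ.filter (fun i => i ≤ m), r i) / ((m : ℝ) + 1)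
          - δ / ((m : ℝ) + 1))
    (hDRO_eq : πDRO = fun i => if i ≤ m then 1 / ((m : ℝ) + 1) else 0) :
    (∑ i, πDRO i * t i) ≤ (∑ i, πDRRO i * t i) ∧
    (StrictMono φ → πDRRO ≠ πDRO →
      (∑ i, πDRO i * t i) < (∑ i, πDRRO i * t i)) := by
  have hanti : Antitone πDRRO := drro_antitone hDRRO_mem hDRRO_opt hδ.le hr
  have hsupp : ∀ i, 0 < πDRRO i → i ≤ m := fun i hi => not_lt.1 fun hmi =>
    (hm i).not_gt <| penalizedTopMean_lt hr.antitone hmi <|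
      sum_sub_lt_of_drro_pos hDRRO_mem hDRRO_opt hδ hi notMem_Iio_self
  have hmass : ∑ i, πDRRO i = ∑ i, πDRO i := by
    rw [hDRRO_mem.2, hDRO_eq, sum_ite_le_one_div_eq_one]
  have hcross : ∀ i j, πDRO i < πDRRO i → πDRRO j < πDRO j → i < j := by
    subst hDRO_eq
    exact fun i j => lt_of_crossing_uniform hanti hDRRO_mem.1 hsupp
  subst ht
  exact ⟨sum_mul_le_sum_mul_of_crossing hmass hcross (hφ.comp_antitone hr.antitone),
    fun hφs => sum_mul_lt_sum_mul_of_crossing hmass hcross (hφs.comp_strictAnti hr)⟩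

/-- under a rank-preserving true reward, the DRRO optimizer weakly
dominates the explicit top-k-uniform DRO optimizer, strictly when φ is strictly
increasing and the optimizers differ. -/
theorem stmt16 (n : ℕ) [NeZero n] (r : Fin n → ℝ) (hr : StrictAnti r)
    (δ : ℝ) (hδ : 0 < δ)
    (φ : ℝ → ℝ) (hφ : Monotone φ)
    (t : Fin n → ℝ) (ht : t = fun i => φ (r i))
    (πDRRO : Fin n → ℝ) (hDRRO_mem : πDRRO ∈ stdSimplex ℝ (Fin n))
    (hDRRO_opt : ∀ π ∈ stdSimplex ℝ (Fin n),
      (∑ i, π i * r i) - (⨆ i, (r i - δ * π i))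
        ≤ (∑ i, πDRRO i * r i) - (⨆ i, (r i - δ * πDRRO i)))
    (πDRO : Fin n → ℝ)
    (hDRO_opt : ∀ π ∈ stdSimplex ℝ (Fin n),
      (∑ i, π i * r i) - δ * (⨆ i, π i)
        ≤ (∑ i, πDRO i * r i) - δ * (⨆ i, πDRO i))
    (m : Fin n)
    (hm : ∀ k : Fin n,
      (∑ i ∈ Finset.univ.filter (fun i => i ≤ k), r i) / ((k : ℝ) + 1)
          - δ / ((k : ℝ) + 1)
        ≤ (∑ i ∈ Finset.univ.filter (fun i => i ≤ m), r i) / ((m : ℝ) + 1)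
          - δ / ((m : ℝ) + 1))
    (hDRO_eq : πDRO = fun i => if i ≤ m then 1 / ((m : ℝ) + 1) else 0) :
    (∑ i, πDRO i * t i) ≤ (∑ i, πDRRO i * t i) ∧
    (StrictMono φ → πDRRO ≠ πDRO →
      (∑ i, πDRO i * t i) < (∑ i, πDRRO i * t i)) :=
  stmt16_general n r hr δ hδ φ hφ t ht πDRRO hDRRO_mem hDRRO_opt πDRO m hm hDRO_eq
end
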